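/- arXiv:1005.1871 — 9 statements merged into one kernel-verified Lean document; each statement's English description precedes it below -/
import Mathlib

section
/- For any subset U ⊆ {0,...,q-2}^r, the generalized toric code C_U = ev(F_q[U]) has dimension |U| over F_q. -/
open scoped BigOperators

/-- Evaluation vector of the monomial `x^u` at all points of the torus `(Fˣ)^r`. -/
noncomputable def monomEval (F : Type) [Field F] {r m : ℕ}
    (u : Fin r → ZMod m) : (Fin r → Fˣ) → F :=
  fun t => ∏ j, ((t j : F) ^ (u j).val)

/-- `monomEval` as a monoid hom from the torus to `F`. -/
noncomputable def monomEvalHom (F : Type) [Field F] {r m : ℕ}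
    (u : Fin r → ZMod m) : (Fin r → Fˣ) →* F where
  toFun := monomEval F u
  map_one' := by simp [monomEval]
  map_mul' t s := by
    simp [monomEval, mul_pow, Finset.prod_mul_distrib]

theorem monomEvalHom_injective (F : Type) [Field F] [Fintype F] (r : ℕ) :
    Function.Injective
      (monomEvalHom F : (Fin r → ZMod (Fintype.card F - 1)) → _) := by
  classical
  set m := Fintype.card F - 1 with hm
  have hcard : Fintype.card Fˣ = m := by
    rw [hm, Fintype.card_units]
  haveI : NeZero m := ⟨by
    rw [hm]
    have : 2 ≤ Fintype.card F := Fintype.one_lt_card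
    omega⟩
  obtain ⟨g, hg⟩ := IsCyclic.exists_generator (α := Fˣ)
  have horder : orderOf g = m := by
    rw [orderOf_eq_card_of_forall_mem_zpowers hg, Nat.card_eq_fintype_card, hcard]
  intro u v huv
  funext j
  have h := congrArg (fun f : (Fin r → Fˣ) →* F => f (Function.update 1 j g)) huv
  simp only [monomEvalHom, MonoidHom.coe_mk, OneHom.coe_mk, monomEval] at h
  have hval : ∀ w : Fin r → ZMod m,
      (∏ j', ((Function.update (1 : Fin r → Fˣ) j g j' : F) ^ (w j').val))
        = (g : F) ^ (w j).val := by
    intro w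
    rw [Fintype.prod_eq_single j, Function.update_self]
    intro b hb
    rw [Function.update_apply, if_neg hb, Pi.one_apply, Units.val_one, one_pow]
  change (∏ j', ((Function.update (1 : Fin r → Fˣ) j g j' : F) ^ (u j').val)) = ∏ j', ((Function.update (1 : Fin r → Fˣ) j g j' : F) ^ (v j').val) at h
  rw [hval u, hval v] at h
  have h' : g ^ (u j).val = g ^ (v j).val := by
    ext
    push_cast
    exact h
  have hmod : (u j).val ≡ (v j).val [MOD m] := by
    have := (pow_eq_pow_iff_modEq).mp h'
    rwa [horder] at this
  have hlt1 := ZMod.val_lt (u j)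
  have hlt2 := ZMod.val_lt (v j)
  have : (u j).val = (v j).val :=
    Nat.ModEq.eq_of_lt_of_lt hmod hlt1 hlt2
  calc u j = ((u j).val : ZMod m) := (ZMod.natCast_rightInverse (u j)).symm
    _ = ((v j).val : ZMod m) := by rw [this]
    _ = v j := ZMod.natCast_rightInverse (v j)

/-- For any `U ⊆ {0,…,q-2}^r`, the generalized toric code
`C_U = ev(F_q[U])` has dimension `|U|` over `F_q`. -/
theorem subfield_subcodes_stmt1
    (F : Type) [Field F] [Fintype F] (r : ℕ)
    (U : Finset (Fin r → ZMod (Fintype.card F - 1))) :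
    Module.finrank F
      (Submodule.span F (monomEval F ''
        ((U : Set (Fin r → ZMod (Fintype.card F - 1)))))) = U.card := by
  have hinj := monomEvalHom_injective F r
  have hli : LinearIndependent F
      (fun u : U => monomEval F (u : Fin r → ZMod (Fintype.card F - 1))) := by
    have h1 := linearIndependent_monoidHom (Fin r → Fˣ) F
    have h2 := h1.comp (fun u : U => monomEvalHom F (u : Fin r → ZMod (Fintype.card F - 1)))
      (fun a b hab => Subtype.ext (hinj hab))
    exact h2
  have himg : monomEval F '' (U : Set (Fin r → ZMod (Fintype.card F - 1)))
      = Set.range (fun u : U => monomEval F (u : Fin r → ZMod (Fintype.card F - 1))) :=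
    Set.image_eq_range _ _
  rw [himg, finrank_span_eq_card hli, Fintype.card_coe]
end

section
/- Let R = F_{p^s}[y_1,...,y_r]/⟨y_1^{p^s-1}-1,...,y_r^{p^s-1}-1⟩ and f ∈ R. Then f(t) ∈ F_p for all t ∈ (F_{p^s}^*)^r if and only if f^p = f in R. -/
open scoped BigOperators

/-- Evaluation of an element of `R = F_q[y₁,…,y_r]/⟨y_i^{q-1} - 1⟩` (modeled as the
group algebra of `(ℤ/(q-1))^r` over `F_q`) at a point of the torus `(Fˣ)^r`. -/
noncomputable def evalR {F : Type} [Field F] {r m : ℕ}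
    (f : AddMonoidAlgebra F (Fin r → ZMod m)) (t : Fin r → Fˣ) : F :=
  (f.coeff : (Fin r → ZMod m) →₀ F).sum fun b a => a * ∏ j, ((t j : F) ^ (b j).val)

section Aux
variable {F : Type} [Field F] {r n : ℕ}

/-- `a^((x+y).val) = a^(x.val) * a^(y.val)` when `a^n = 1`. -/
lemma pow_val_add [NeZero n] {a : F} (ha : a ^ n = 1) (x y : ZMod n) :
    a ^ (x + y).val = a ^ x.val * a ^ y.val := by
  rw [ZMod.val_add, ← pow_add]
  conv_rhs => rw [← Nat.div_add_mod (x.val + y.val) n]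
  rw [pow_add, pow_mul, ha, one_pow, one_mul]

/-- The multiplicative character of the torus indexed by an exponent vector. -/
noncomputable def torusChar (hn : ∀ u : Fˣ, (u : F) ^ n = 1)
    (b : Fin r → ZMod n) : (Fin r → Fˣ) →* F where
  toFun t := ∏ j, ((t j : F) ^ (b j).val)
  map_one' := by simp
  map_mul' t t' := by
    simp [Units.val_mul, mul_pow, Finset.prod_mul_distrib]

/-- Evaluation at a torus point, as a monoid hom on `Multiplicative G`. -/
noncomputable def torusEval [NeZero n] (hn : ∀ u : Fˣ, (u : F) ^ n = 1)
    (t : Fin r → Fˣ) : Multiplicative (Fin r → ZMod n) →* F where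
  toFun b := ∏ j, ((t j : F) ^ ((Multiplicative.toAdd b) j).val)
  map_one' := by simp
  map_mul' b c := by
    simp only [toAdd_mul, Pi.add_apply, ← Finset.prod_mul_distrib]
    exact Finset.prod_congr rfl fun j _ => pow_val_add (hn (t j)) _ _

lemma evalR_eq [NeZero n] (hn : ∀ u : Fˣ, (u : F) ^ n = 1)
    (f : AddMonoidAlgebra F (Fin r → ZMod n)) (t : Fin r → Fˣ) :
    evalR f t = AddMonoidAlgebra.lift F F (Fin r → ZMod n) (torusEval hn t) f := by
  rw [AddMonoidAlgebra.lift_apply, evalR]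
  exact Finsupp.sum_congr fun b _ => by simp [torusEval, smul_eq_mul]

end Aux

section Inj
variable {F : Type} [Field F] {r n : ℕ}

lemma torusChar_injective [NeZero n] (hn : ∀ u : Fˣ, (u : F) ^ n = 1)
    {g : Fˣ} (hg : orderOf g = n) :
    Function.Injective (torusChar (F := F) (r := r) hn) := by
  intro b c h
  funext j
  have ht := DFunLike.congr_fun h (Function.update (1 : Fin r → Fˣ) j g)
  have key : ∀ b' : Fin r → ZMod n,
      torusChar hn b' (Function.update (1 : Fin r → Fˣ) j g) = (g : F) ^ (b' j).val := by
    intro b'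
    show (∏ i, ((Function.update (1 : Fin r → Fˣ) j g i : F) ^ (b' i).val)) = _
    rw [Finset.prod_eq_single j]
    · rw [Function.update_self]
    · intro i _ hij
      rw [Function.update_of_ne hij]
      simp
    · simp
  rw [key, key] at ht
  have horder : orderOf ((g : F)) = n := by rw [orderOf_units, hg]
  have htu : g ^ (b j).val = g ^ (c j).val :=
    Units.ext (by simpa [Units.val_pow_eq_pow_val] using ht)
  have hmod : (b j).val ≡ (c j).val [MOD n] := by
    have := pow_eq_pow_iff_modEq.mp htu
    rwa [hg] at this
  have := (Nat.ModEq.eq_of_lt_of_lt hmod (ZMod.val_lt _) (ZMod.val_lt _))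
  exact ZMod.val_injective n this

/-- If all torus evaluations vanish, the element is zero. -/
lemma evalR_eq_zero [NeZero n] (hn : ∀ u : Fˣ, (u : F) ^ n = 1)
    {g : Fˣ} (hg : orderOf g = n)
    (f : AddMonoidAlgebra F (Fin r → ZMod n)) (h : ∀ t, evalR f t = 0) : f = 0 := by
  have hli := (linearIndependent_monoidHom (Fin r → Fˣ) F).comp (torusChar hn)
    (torusChar_injective hn hg)
  have h0 : Finsupp.linearCombination F
      ((fun φ : (Fin r → Fˣ) →* F => (φ : (Fin r → Fˣ) → F)) ∘ torusChar hn) f.coeff = 0 := by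
    funext t
    have ht := h t
    rw [evalR] at ht
    simpa [Finsupp.linearCombination_apply, Finsupp.sum, Finset.sum_apply, torusChar, smul_eq_mul] using ht
  exact AddMonoidAlgebra.coeff_injective ((linearIndependent_iff.mp hli f.coeff h0).trans AddMonoidAlgebra.coeff_zero.symm)

end Inj

lemma mem_bot_iff_frob {F : Type} [Field F] {p : ℕ} [Fact p.Prime] [CharP F p] (x : F) :
    x ∈ (⊥ : Subfield F) ↔ x ^ p = x := by
  classical
  have hp : p.Prime := Fact.out
  set φ : ZMod p →+* F := ZMod.castHom dvd_rfl F with hφ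
  have hrange : ∀ k : ZMod p, φ k ∈ (⊥ : Subfield F) := by
    intro k
    have : φ k = ((k.val : ℕ) : F) := by
      rw [ZMod.castHom_apply, ← ZMod.natCast_val]
    rw [this]
    exact natCast_mem (⊥ : Subfield F) k.val
  constructor
  · intro hx
    have hle : (⊥ : Subfield F) ≤ φ.fieldRange := bot_le
    have hx' : x ∈ φ.fieldRange := hle hx
    obtain ⟨k, rfl⟩ := RingHom.mem_fieldRange.mp hx'
    rw [← map_pow, ZMod.pow_card]
  · intro hx
    set P : Polynomial F := Polynomial.X ^ p - Polynomial.X with hP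
    have hPne : P ≠ 0 := by
      intro h0
      have := congrArg (fun q => Polynomial.coeff q p) h0
      simp [hP, Polynomial.coeff_X, hp.one_lt.ne] at this
    have hdeg : P.natDegree ≤ p := by
      refine (Polynomial.natDegree_sub_le _ _).trans ?_
      simp [Polynomial.natDegree_X_pow, hp.one_lt.le]
    have hS : (Finset.univ.image φ).card = p := by
      rw [Finset.card_image_of_injective _ φ.injective, Finset.card_univ, ZMod.card]
    have hsub : Finset.univ.image φ ⊆ P.roots.toFinset := by
      intro y hy
      obtain ⟨k, _, rfl⟩ := Finset.mem_image.mp hy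
      rw [Multiset.mem_toFinset, Polynomial.mem_roots hPne]
      show P.IsRoot (φ k)
      simp [hP, Polynomial.IsRoot, ← map_pow, ZMod.pow_card]
    have hcard : P.roots.toFinset.card ≤ (Finset.univ.image φ).card := by
      rw [hS]
      exact (Multiset.toFinset_card_le _).trans ((Polynomial.card_roots' P).trans hdeg)
    have heq := Finset.eq_of_subset_of_card_le hsub hcard
    have hxroot : x ∈ P.roots.toFinset := by
      rw [Multiset.mem_toFinset, Polynomial.mem_roots hPne]
      show P.IsRoot x
      simp [hP, Polynomial.IsRoot, hx]
    rw [← heq] at hxroot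
    obtain ⟨k, _, rfl⟩ := Finset.mem_image.mp hxroot
    exact hrange k

/-- For `f ∈ R = F_{p^s}[y]/⟨y_i^{p^s-1}-1⟩`, `f(t) ∈ F_p` for all
torus points `t` if and only if `f^p = f` in `R`. (The prime subfield `F_p` is
`⊥ : Subfield F`.) -/
theorem subfield_subcodes_stmt3
    (p s r : ℕ) [Fact p.Prime] (hs : 0 < s)
    (F : Type) [Field F] [Fintype F] (hF : Fintype.card F = p ^ s)
    (f : AddMonoidAlgebra F (Fin r → ZMod (p ^ s - 1))) :
    (∀ t : Fin r → Fˣ, evalR f t ∈ (⊥ : Subfield F)) ↔ f ^ p = f := by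
  classical
  have hp : p.Prime := Fact.out
  have hq1 : 1 < p ^ s := Nat.one_lt_pow hs.ne' hp.one_lt
  haveI : NeZero (p ^ s - 1) := ⟨by omega⟩
  -- characteristic of F is p
  haveI hcharF : CharP F p := by
    obtain ⟨p', hp'⟩ := CharP.exists F
    haveI := hp'
    obtain ⟨m, hp'prime, hcard⟩ := FiniteField.card F p'
    have hdvd : p ∣ p' := by
      apply hp.dvd_of_dvd_pow (n := (m : ℕ))
      rw [← hcard, hF]
      exact dvd_pow_self p hs.ne'
    have : p = p' := (Nat.prime_dvd_prime_iff_eq hp hp'prime).mp hdvd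
    subst this
    exact hp'
  -- all units satisfy u ^ (p^s - 1) = 1
  have hn : ∀ u : Fˣ, (u : F) ^ (p ^ s - 1) = 1 := by
    intro u
    rw [← hF]
    exact FiniteField.pow_card_sub_one_eq_one (u : F) u.ne_zero
  -- a generator of the unit group, of order p^s - 1
  obtain ⟨g, hgmem⟩ := IsCyclic.exists_generator (α := Fˣ)
  have hg : orderOf g = p ^ s - 1 := by
    rw [orderOf_eq_card_of_forall_mem_zpowers hgmem, Nat.card_eq_fintype_card, Fintype.card_units, hF]
  constructor
  · intro h
    have key : ∀ t, evalR (f ^ p - f) t = 0 := by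
      intro t
      rw [evalR_eq hn, map_sub, map_pow, ← evalR_eq hn]
      have := (mem_bot_iff_frob (p := p) (evalR f t)).mp (h t)
      rw [this, sub_self]
    exact sub_eq_zero.mp (evalR_eq_zero hn hg _ key)
  · intro h t
    rw [mem_bot_iff_frob (p := p)]
    have : evalR f t ^ p = evalR (f ^ p) t := by
      rw [evalR_eq hn, evalR_eq hn, map_pow]
    rw [this, h]
end

section
/- For b ∈ (Z/(p^s-1))^r and β ∈ F_{p^s}, the polynomial f_{I_b,β} = Σ_{i=0}^{n_b-1} β^{p^i} y^{b·p^i} satisfies f_{I_b,β}^p = f_{I_b,β} in R (i.e., evaluates to F_p) if and only if β ∈ F_{p^{n_b}}, i.e., β^{p^{n_b}} = β. -/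
open scoped BigOperators

/-- The polynomial `f_{I_b,β} = Σ_{i=0}^{n-1} β^{p^i} y^{b·p^i}` in
`R = F_{p^s}[y]/⟨y_j^{p^s-1}-1⟩`, modeled as the group algebra of `(ℤ/(p^s-1))^r`. -/
noncomputable def fI {F : Type} [Field F] {r m : ℕ} (p n : ℕ)
    (b : Fin r → ZMod m) (β : F) : AddMonoidAlgebra F (Fin r → ZMod m) :=
  ∑ i ∈ Finset.range n, AddMonoidAlgebra.single (p ^ i • b) (β ^ (p ^ i))

/-- For `b ∈ (ℤ/(p^s-1))^r` with coset size `n_b` and `β ∈ F_{p^s}`,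
the polynomial `f_{I_b,β}` satisfies `f_{I_b,β}^p = f_{I_b,β}` in `R` (i.e. evaluates
to `F_p`) if and only if `β^{p^{n_b}} = β`, i.e. `β ∈ F_{p^{n_b}}`. -/
theorem subfield_subcodes_stmt9
    (p s r : ℕ) [Fact p.Prime] (hs : 0 < s)
    (F : Type) [Field F] [Fintype F] (hF : Fintype.card F = p ^ s)
    (b : Fin r → ZMod (p ^ s - 1))
    (nb : ℕ) (hnb : 0 < nb) (hfix : p ^ nb • b = b)
    (hmin : ∀ m : ℕ, 0 < m → p ^ m • b = b → nb ≤ m)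
    (β : F) :
    fI p nb b β ^ p = fI p nb b β ↔ β ^ (p ^ nb) = β := by
  have hp : p.Prime := Fact.out
  -- char of F is p
  haveI : CharP F p := by
    obtain ⟨n, hq, hcard⟩ := FiniteField.card F (ringChar F)
    have : p = ringChar F := by
      have hdvd : p ∣ ringChar F ^ (n : ℕ) := by
        rw [hF] at hcard; rw [← hcard]; exact dvd_pow_self p hs.ne'
      exact ((Nat.prime_dvd_prime_iff_eq hp hq).mp (hp.dvd_of_dvd_pow hdvd))
    rw [this]; exact ringChar.charP F
  haveI : CharP (AddMonoidAlgebra F (Fin r → ZMod (p ^ s - 1))) p :=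
    charP_of_injective_algebraMap (algebraMap F _).injective p
  have key : fI p nb b β ^ p + AddMonoidAlgebra.single b β
      = fI p nb b β + AddMonoidAlgebra.single b (β ^ p ^ nb) := by
    unfold fI
    rw [sum_pow_char]
    have h1 : ∀ i : ℕ, (AddMonoidAlgebra.single (R := F) (p ^ i • b) (β ^ p ^ i)) ^ p
        = AddMonoidAlgebra.single (p ^ (i + 1) • b) (β ^ p ^ (i + 1)) := by
      intro i
      rw [AddMonoidAlgebra.single_pow, smul_smul, ← pow_succ', ← pow_mul, ← pow_succ]
    simp only [h1]
    have := Finset.sum_range_succ' (fun i => AddMonoidAlgebra.single (R := F) (p ^ i • b) (β ^ p ^ i)) nb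
    have h2 := Finset.sum_range_succ (fun i => AddMonoidAlgebra.single (R := F) (p ^ i • b) (β ^ p ^ i)) nb
    rw [h2] at this
    simp only [pow_zero, one_smul] at this
    rw [hfix] at this
    simp only [pow_one] at this
    exact this.symm
  constructor
  · intro h
    rw [h] at key
    have := add_left_cancel key
    exact (AddMonoidAlgebra.single_right_inj.mp this).symm
  · intro h
    rw [h] at key
    exact add_right_cancel key
end

section
/- Let f ∈ R with f^p = f and supp(f) = I_b (the cyclotomic coset of b), and let β be a primitive element of F_{p^{n_b}} ⊆ F_{p^s}. Then f is an F_p-linear combination of f_{I_b,1}, f_{I_b,β}, ..., f_{I_b,β^{n_b-1}}. -/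
open Polynomial

lemma mem_powers_of_pow_eq_one {F : Type} [Field F] [Fintype F] {m : ℕ} (hm : 0 < m)
    {α β : F} (hα : α ^ m = 1) (hord : orderOf β = m) :
    ∃ k, k < m ∧ α = β ^ k := by
  classical
  have hsub : Finset.image (β ^ ·) (Finset.range m) ⊆ (nthRoots m (1:F)).toFinset := by
    intro x hx
    simp only [Finset.mem_image, Finset.mem_range] at hx
    obtain ⟨k, hk, rfl⟩ := hx
    rw [Multiset.mem_toFinset, mem_nthRoots hm, ← pow_mul, mul_comm, pow_mul, ← hord,
      pow_orderOf_eq_one, one_pow]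
  have hcard : m ≤ (Finset.image (β ^ ·) (Finset.range m)).card := by
    rw [Finset.card_image_of_injOn]
    · simp
    · intro i hi j hj hij
      exact pow_injOn_Iio_orderOf (by simpa [hord] using hi) (by simpa [hord] using hj) hij
  have heq : Finset.image (β ^ ·) (Finset.range m) = (nthRoots m (1:F)).toFinset :=
    Finset.eq_of_subset_of_card_le hsub
      (le_trans (le_trans (Multiset.toFinset_card_le _) (card_nthRoots m 1)) hcard)
  have hαmem : α ∈ (nthRoots m (1:F)).toFinset := by
    rw [Multiset.mem_toFinset, mem_nthRoots hm]; exact hα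
  rw [← heq] at hαmem
  simp only [Finset.mem_image, Finset.mem_range] at hαmem
  obtain ⟨k, hk, hk2⟩ := hαmem
  exact ⟨k, hk, hk2.symm⟩

lemma exists_natCast_repr (p nb : ℕ) [Fact p.Prime] {F : Type} [Field F] [Fintype F] [CharP F p]
    (hnb : 0 < nb) {α β : F} (hα : α ^ p ^ nb = α) (hα0 : α ≠ 0)
    (hβ : β ^ p ^ nb = β) (hord : orderOf β = p ^ nb - 1) :
    ∃ c : ℕ → ℕ, α = ∑ j ∈ Finset.range nb, ((c j : F) * β ^ j) := by
  classical
  letI := ZMod.algebra F p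
  have hp1 : 1 < p := (Fact.out : p.Prime).one_lt
  have hq2 : 2 ≤ p ^ nb := by
    calc 2 ≤ p := hp1
    _ = p ^ 1 := (pow_one p).symm
    _ ≤ p ^ nb := Nat.pow_le_pow_right (le_of_lt hp1) hnb
  have hm : 0 < p ^ nb - 1 := by omega
  have hα1 : α ^ (p ^ nb - 1) = 1 := by
    have : α ^ (p ^ nb - 1) * α = 1 * α := by
      rw [one_mul, ← pow_succ]
      have : p ^ nb - 1 + 1 = p ^ nb := by omega
      rw [this, hα]
    exact mul_right_cancel₀ hα0 this
  obtain ⟨k, hk, hαk⟩ := mem_powers_of_pow_eq_one hm hα1 hord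
  -- integrality
  have hint : IsIntegral (ZMod p) β := IsIntegral.of_finite (ZMod p) β
  set A := Algebra.adjoin (ZMod p) ({β} : Set F) with hA
  have hβA : β ∈ A := Algebra.subset_adjoin rfl
  have hαA : α ∈ A := hαk ▸ pow_mem hβA k
  set pb := Algebra.adjoin.powerBasis hint with hpb
  -- every element of A satisfies x ^ p ^ nb = x
  have hfix : ∀ x ∈ A, x ^ p ^ nb = x := by
    intro x hx
    induction hx using Algebra.adjoin_induction with
    | mem y hy => rw [Set.mem_singleton_iff] at hy; rw [hy]; exact hβ
    | algebraMap r =>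
        rw [← map_pow]
        congr 1
        exact ZMod.pow_card_pow r
    | add x y _ _ hx hy => rw [add_pow_char_pow, hx, hy]
    | mul x y _ _ hx hy => rw [mul_pow, hx, hy]
  -- card bound
  have hcardA : Fintype.card A ≤ p ^ nb := by
    set P : F[X] := X ^ (p ^ nb) - X with hP
    have hP0 : P ≠ 0 := by
      intro h
      have := congrArg (fun q => Polynomial.coeff q 1) h
      simp only [hP, coeff_sub, coeff_X_pow, coeff_X, coeff_zero] at this
      rw [if_neg (by omega : ¬ (1 = p ^ nb))] at this
      simp at this
    set T := P.roots.toFinset with hT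
    have hmem : ∀ x : A, (x : F) ∈ T := by
      intro x
      rw [hT, Multiset.mem_toFinset, mem_roots hP0]
      simp only [hP, IsRoot, eval_sub, eval_pow, eval_X]
      rw [hfix x x.2, sub_self]
    have hinj : Function.Injective (fun x : A => (⟨(x : F), hmem x⟩ : T)) := by
      intro x y h
      have h' : (⟨(x : F), hmem x⟩ : T) = ⟨(y : F), hmem y⟩ := h
      exact Subtype.ext (Subtype.mk_eq_mk.mp h')
    calc Fintype.card A ≤ Fintype.card T := Fintype.card_le_of_injective _ hinj
    _ = T.card := Fintype.card_coe T
    _ ≤ Multiset.card P.roots := Multiset.toFinset_card_le _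
    _ ≤ P.natDegree := card_roots' P
    _ ≤ p ^ nb := by
        apply le_trans (natDegree_sub_le _ _)
        simp only [natDegree_X_pow, natDegree_X]
        omega
  have hdim : pb.dim ≤ nb := by
    have h1 : Fintype.card A = p ^ Module.finrank (ZMod p) A := by
      have := Module.card_eq_pow_finrank (K := ZMod p) (V := A)
      rwa [ZMod.card] at this
    have h2 : Module.finrank (ZMod p) A = pb.dim := pb.finrank
    rw [h2] at h1
    rw [h1] at hcardA
    exact (Nat.pow_le_pow_iff_right hp1).mp hcardA
  -- basis representation
  set αA : A := ⟨α, hαA⟩ with hαA'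
  have hrepr := pb.basis.sum_repr αA
  -- push through val
  have hval : ∀ i : Fin pb.dim, (A.val) (pb.basis i) = β ^ (i : ℕ) := by
    intro i
    rw [pb.basis_eq_pow i, map_pow]
    congr 1
  obtain ⟨n, hn⟩ : ∃ n : Fin pb.dim → ℕ, ∀ i, pb.basis.repr αA i = (n i : ZMod p) := by
    choose n hn using fun i => ZMod.natCast_zmod_surjective (n := p) (pb.basis.repr αA i)
    exact ⟨n, fun i => (hn i).symm⟩
  have hα' : α = ∑ i : Fin pb.dim, (n i : F) * β ^ (i : ℕ) := by
    have := congrArg A.val hrepr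
    rw [map_sum] at this
    conv_lhs => rw [show α = A.val αA from rfl, ← this]
    apply Finset.sum_congr rfl
    intro i _
    rw [map_smul, hn i, hval i, Algebra.smul_def, map_natCast]
  -- extend with zeros
  refine ⟨fun j => if h : j < pb.dim then n ⟨j, h⟩ else 0, ?_⟩
  have h1 : ∑ j ∈ Finset.range nb, (((if h : j < pb.dim then n ⟨j, h⟩ else 0 : ℕ) : F) * β ^ j)
      = ∑ j ∈ Finset.range pb.dim, (((if h : j < pb.dim then n ⟨j, h⟩ else 0 : ℕ) : F) * β ^ j) := by
    symm
    apply Finset.sum_subset (Finset.range_subset_range.mpr hdim)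
    intro x _ hx'
    rw [Finset.mem_range] at hx'
    rw [dif_neg hx']
    simp
  have h2 : ∑ j ∈ Finset.range pb.dim, (((if h : j < pb.dim then n ⟨j, h⟩ else 0 : ℕ) : F) * β ^ j)
      = ∑ i : Fin pb.dim, (n i : F) * β ^ (i : ℕ) := by
    rw [Finset.sum_range]
    apply Finset.sum_congr rfl
    intro i _
    rw [dif_pos i.2]
  rw [hα', h1, h2]

open scoped BigOperators

/-- If `f ∈ R` satisfies `f^p = f` and `supp(f) = I_b`, and `β` is a
primitive element of `F_{p^{n_b}} ⊆ F_{p^s}` (i.e. `β^{p^{n_b}} = β` and `β` has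
multiplicative order `p^{n_b} - 1`), then `f` is an `F_p`-linear combination of
`f_{I_b,1}, f_{I_b,β}, …, f_{I_b,β^{n_b-1}}` (coefficients in the prime subfield
`⊥ : Subfield F`). -/
theorem subfield_subcodes_stmt10
    (p s r : ℕ) [Fact p.Prime] (hs : 0 < s)
    (F : Type) [Field F] [Fintype F] (hF : Fintype.card F = p ^ s)
    (b : Fin r → ZMod (p ^ s - 1))
    (nb : ℕ) (hnb : 0 < nb) (hfix : p ^ nb • b = b)
    (hmin : ∀ m : ℕ, 0 < m → p ^ m • b = b → nb ≤ m)
    (f : AddMonoidAlgebra F (Fin r → ZMod (p ^ s - 1)))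
    (hf : f ^ p = f)
    (hsupp : ((f.coeff : (Fin r → ZMod (p ^ s - 1)) →₀ F).support : Set (Fin r → ZMod (p ^ s - 1)))
      = {x | ∃ i : ℕ, x = p ^ i • b})
    (β : F) (hβ : β ^ (p ^ nb) = β) (hord : orderOf β = p ^ nb - 1) :
    ∃ c : Fin nb → F, (∀ j, c j ∈ (⊥ : Subfield F)) ∧
      f = ∑ j : Fin nb, c j • fI p nb b (β ^ (j : ℕ)) := by
  classical
  have hp : p.Prime := Fact.out
  have hp1 : 1 < p := hp.one_lt
  -- characteristic
  have hpF : (p : F) = 0 := by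
    have h1 : ((p ^ s : ℕ) : F) = 0 := by rw [← hF]; exact FiniteField.cast_card_eq_zero F
    rw [Nat.cast_pow] at h1
    exact pow_eq_zero_iff hs.ne' |>.mp h1
  haveI hchar : CharP F p := (CharP.charP_iff_prime_eq_zero hp).mpr hpF
  set g : ℕ → (Fin r → ZMod (p ^ s - 1)) := fun i => p ^ i • b with hg
  have hg_per : ∀ i, g (i + nb) = g i := by
    intro i
    show p ^ (i + nb) • b = p ^ i • b
    rw [pow_add, mul_smul, hfix]
  have hg_zero : g 0 = b := by simp [hg]
  have hg_nb : g nb = b := by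
    have := hg_per 0
    rwa [Nat.zero_add, hg_zero] at this
  have hg_mod : ∀ i, g i = g (i % nb) := by
    intro i
    conv_lhs => rw [← Nat.mod_add_div i nb]
    generalize i / nb = k
    induction k with
    | zero => simp
    | succ k ih =>
        rw [Nat.mul_succ, ← Nat.add_assoc, hg_per, ih]
  have hg_key : ∀ i j : ℕ, i < j → j < nb → g i = g j → False := by
    intro i j hij hj h
    have h2 : g (nb - j + i) = g (nb - j + j) := by
      show p ^ (nb - j + i) • b = p ^ (nb - j + j) • b
      rw [pow_add, pow_add, mul_smul, mul_smul]
      show p ^ (nb - j) • g i = p ^ (nb - j) • g j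
      rw [h]
    have h3 : nb - j + j = nb := by omega
    rw [h3, hg_nb] at h2
    have := hmin (nb - j + i) (by omega) h2
    omega
  have hg_inj : ∀ {i j : ℕ}, i < nb → j < nb → g i = g j → i = j := by
    intro i j hi hj h
    rcases lt_trichotomy i j with hlt | heq | hgt
    · exact absurd (hg_key i j hlt hj h) not_false
    · exact heq
    · exact absurd (hg_key j i hgt hi h.symm) not_false
  have hb_mem : ∀ i, g i ∈ f.coeff.support := by
    intro i
    rw [← Finset.mem_coe, hsupp]
    exact ⟨i, rfl⟩
  have hb0 : b ∈ f.coeff.support := hg_zero ▸ hb_mem 0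
  set α := f.coeff b with hαdef
  have hα0 : α ≠ 0 := Finsupp.mem_support_iff.mp hb0
  -- frobenius expansion of f
  haveI : CharP (AddMonoidAlgebra F (Fin r → ZMod (p ^ s - 1))) p :=
    charP_of_injective_ringHom
      (f := (AddMonoidAlgebra.singleZeroRingHom :
        F →+* AddMonoidAlgebra F (Fin r → ZMod (p ^ s - 1))))
      (fun a c h => Finsupp.single_injective 0 (congrArg AddMonoidAlgebra.coeff h)) p
  have hfp : f = ∑ x ∈ f.coeff.support, AddMonoidAlgebra.single (p • x) (f.coeff x ^ p) := by
    have hrep : f = ∑ x ∈ f.coeff.support, AddMonoidAlgebra.single x (f.coeff x) :=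
      (AddMonoidAlgebra.sum_coeff_single f).symm
    conv_lhs => rw [← hf]
    calc f ^ p = frobenius _ p f := (frobenius_def ..).symm
    _ = frobenius _ p (∑ x ∈ f.coeff.support, AddMonoidAlgebra.single x (f.coeff x)) := by rw [← hrep]
    _ = ∑ x ∈ f.coeff.support, frobenius _ p (AddMonoidAlgebra.single x (f.coeff x)) := map_sum _ _ _
    _ = ∑ x ∈ f.coeff.support, AddMonoidAlgebra.single (p • x) (f.coeff x ^ p) := by
        apply Finset.sum_congr rfl
        intro x _
        rw [frobenius_def, AddMonoidAlgebra.single_pow]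
  have hsmul_g : ∀ i, p • g i = g (i + 1) := by
    intro i
    show p • (p ^ i • b) = p ^ (i + 1) • b
    rw [← mul_smul, ← pow_succ']
  have hg_smul : ∀ a i : ℕ, p ^ a • g i = g (a + i) := by
    intro a i
    show p ^ a • (p ^ i • b) = p ^ (a + i) • b
    rw [pow_add, mul_smul]
  have hstep : ∀ i : ℕ, f.coeff (g (i + 1)) = (f.coeff (g i)) ^ p := by
    intro i
    conv_lhs => rw [hfp]
    rw [AddMonoidAlgebra.coeff_sum, Finsupp.finset_sum_apply]
    have hterm : ∀ x ∈ f.coeff.support,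
        (AddMonoidAlgebra.single (p • x) (f.coeff x ^ p)).coeff (g (i + 1))
          = if x = g i then f.coeff x ^ p else 0 := by
      intro x hx
      by_cases hxe : x = g i
      · subst hxe
        rw [AddMonoidAlgebra.coeff_single, Finsupp.single_apply, if_pos (hsmul_g i), if_pos rfl]
      · have hne : ¬ (p • x = g (i + 1)) := by
          intro hcontra
          obtain ⟨j, rfl⟩ : ∃ j, x = g j := by
            have hx' := hx
            rw [← Finset.mem_coe, hsupp] at hx'
            exact hx'
          apply hxe
          have h1 : g (j + 1) = g (i + 1) := by rw [← hsmul_g j, hcontra]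
          have h2 : g (j + nb) = g (i + nb) := by
            have e : ∀ t : ℕ, nb - 1 + (t + 1) = t + nb := fun t => by omega
            calc g (j + nb) = g (nb - 1 + (j + 1)) := by rw [e]
            _ = p ^ (nb - 1) • g (j + 1) := (hg_smul _ _).symm
            _ = p ^ (nb - 1) • g (i + 1) := by rw [h1]
            _ = g (nb - 1 + (i + 1)) := hg_smul _ _
            _ = g (i + nb) := by rw [e]
          rwa [hg_per j, hg_per i] at h2
        rw [AddMonoidAlgebra.coeff_single, Finsupp.single_apply, if_neg hne, if_neg hxe]
    rw [Finset.sum_congr rfl hterm, Finset.sum_ite_eq' f.coeff.support (g i) (fun x => f.coeff x ^ p),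
      if_pos (hb_mem i)]
  have hcoef : ∀ i : ℕ, f.coeff (g i) = α ^ p ^ i := by
    intro i
    induction i with
    | zero => rw [hg_zero, pow_zero, pow_one]
    | succ i ih => rw [hstep i, ih, ← pow_mul, ← pow_succ]
  have hαfix : α ^ p ^ nb = α := by
    have := hcoef nb
    rw [hg_nb] at this
    exact this.symm
  obtain ⟨cn, hcn⟩ := exists_natCast_repr p nb hnb hαfix hα0 hβ hord
  refine ⟨fun j => ((cn (j : ℕ) : ℕ) : F), fun j => natCast_mem _ _, ?_⟩
  have hform : f = ∑ i ∈ Finset.range nb, AddMonoidAlgebra.single (g i) (α ^ p ^ i) := by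
    apply AddMonoidAlgebra.ext
    apply Finsupp.ext
    intro y
    rw [AddMonoidAlgebra.coeff_sum, Finsupp.finset_sum_apply]
    by_cases hy : y ∈ f.coeff.support
    · obtain ⟨i, rfl⟩ : ∃ i, y = g i := by
        rw [← Finset.mem_coe, hsupp] at hy
        exact hy
      rw [hg_mod i]
      have hi0 : i % nb < nb := Nat.mod_lt _ hnb
      rw [hcoef (i % nb), Finset.sum_eq_single (i % nb)]
      · rw [AddMonoidAlgebra.coeff_single, Finsupp.single_apply, if_pos rfl]
      · intro j hj hne
        rw [AddMonoidAlgebra.coeff_single, Finsupp.single_apply, if_neg]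
        intro hc
        exact hne (hg_inj (Finset.mem_range.mp hj) hi0 hc)
      · intro h
        exact absurd (Finset.mem_range.mpr hi0) h
    · rw [Finsupp.notMem_support_iff.mp hy]
      symm
      apply Finset.sum_eq_zero
      intro i _
      rw [AddMonoidAlgebra.coeff_single, Finsupp.single_apply, if_neg]
      intro hc
      exact hy (hc ▸ hb_mem i)
  rw [hform]
  symm
  calc ∑ j : Fin nb, ((cn (j : ℕ) : ℕ) : F) • fI p nb b (β ^ (j : ℕ))
      = ∑ j : Fin nb, ∑ i ∈ Finset.range nb,
          AddMonoidAlgebra.single (g i) (((cn (j : ℕ) : ℕ) : F) * (β ^ (j : ℕ)) ^ p ^ i) := by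
        apply Finset.sum_congr rfl
        intro j _
        rw [fI, Finset.smul_sum]
        apply Finset.sum_congr rfl
        intro i _
        rw [AddMonoidAlgebra.smul_single, smul_eq_mul]
    _ = ∑ i ∈ Finset.range nb, ∑ j : Fin nb,
          AddMonoidAlgebra.single (g i) (((cn (j : ℕ) : ℕ) : F) * (β ^ (j : ℕ)) ^ p ^ i) :=
        Finset.sum_comm
    _ = ∑ i ∈ Finset.range nb,
          AddMonoidAlgebra.single (g i) (∑ j : Fin nb, ((cn (j : ℕ) : ℕ) : F) * (β ^ (j : ℕ)) ^ p ^ i) := by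
        apply Finset.sum_congr rfl
        intro i _
        apply AddMonoidAlgebra.ext
        rw [AddMonoidAlgebra.coeff_sum]
        simp only [AddMonoidAlgebra.coeff_single]
        exact (Finsupp.single_finset_sum _ _ _).symm
    _ = ∑ i ∈ Finset.range nb, AddMonoidAlgebra.single (g i) (α ^ p ^ i) := by
        apply Finset.sum_congr rfl
        intro i _
        congr 1
        have hterm : ∀ j : Fin nb,
            ((cn (j : ℕ) : ℕ) : F) * (β ^ (j : ℕ)) ^ p ^ i
              = iterateFrobenius F p i (((cn (j : ℕ) : ℕ) : F) * β ^ (j : ℕ)) := by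
          intro j
          rw [iterateFrobenius_def, mul_pow]
          congr 1
          exact (map_natCast (iterateFrobenius F p i) _).symm
        rw [Finset.sum_congr rfl (fun j _ => hterm j), ← map_sum]
        have : ∑ j : Fin nb, ((cn (j : ℕ) : ℕ) : F) * β ^ (j : ℕ) = α := by
          rw [Fin.sum_univ_eq_sum_range (fun j => ((cn j : ℕ) : F) * β ^ j) nb]
          exact hcn.symm
        rw [this, iterateFrobenius_def]
end

section
/- If β is a primitive element of F_{p^{n_b}}, then the polynomials f_{I_b,1}, f_{I_b,β}, ..., f_{I_b,β^{n_b-1}} are linearly independent over F_p. -/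
open scoped BigOperators

lemma coprime_pow_sub_one (p t : ℕ) (hp : 1 ≤ p) (ht : 0 < t) :
    Nat.Coprime p (p ^ t - 1) := by
  have h1 : 1 ≤ p ^ t := Nat.one_le_pow _ _ hp
  have h2 : Nat.Coprime (p ^ t - 1 + 1) (p ^ t - 1) := by
    simpa using (Nat.coprime_self_add_left (m := p ^ t - 1) (n := 1)).mpr
      (Nat.one_coprime _)
  rw [Nat.sub_add_cancel h1] at h2
  exact Nat.Coprime.coprime_dvd_left (dvd_pow_self p ht.ne') h2

/-- If `β` is a primitive element of `F_{p^{n_b}} ⊆ F_{p^s}`, then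
`f_{I_b,1}, f_{I_b,β}, …, f_{I_b,β^{n_b-1}}` are linearly independent over `F_p`
(the prime subfield `⊥ : Subfield F`). -/
theorem subfield_subcodes_stmt11
    (p s r : ℕ) [Fact p.Prime] (hs : 0 < s)
    (F : Type) [Field F] [Fintype F] (hF : Fintype.card F = p ^ s)
    (b : Fin r → ZMod (p ^ s - 1))
    (nb : ℕ) (hnb : 0 < nb) (hfix : p ^ nb • b = b)
    (hmin : ∀ m : ℕ, 0 < m → p ^ m • b = b → nb ≤ m)
    (β : F) (hβ : β ^ (p ^ nb) = β) (hord : orderOf β = p ^ nb - 1) :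
    ∀ c : Fin nb → F, (∀ j, c j ∈ (⊥ : Subfield F)) →
      ∑ j : Fin nb, c j • fI p nb b (β ^ (j : ℕ)) = 0 → ∀ j, c j = 0 := by
  intro c _hc hsum j0
  classical
  have hp : p.Prime := Fact.out
  have hp1 : 1 < p := hp.one_lt
  -- β is a unit
  have hordpos : 0 < p ^ nb - 1 := by
    have : 2 ≤ p ^ nb := by
      calc 2 ≤ p := hp.two_le
      _ ≤ p ^ nb := Nat.le_self_pow hnb.ne' p
    omega
  have hfin : IsOfFinOrder β := orderOf_pos_iff.mp (hord ▸ hordpos)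
  obtain ⟨u, hu⟩ : IsUnit β := hfin.isUnit
  -- the unit `p` in `ZMod (p ^ s - 1)`
  let w : (ZMod (p ^ s - 1))ˣ := ZMod.unitOfCoprime p (coprime_pow_sub_one p s hp1.le hs)
  have hw : (w : ZMod (p ^ s - 1)) = (p : ZMod (p ^ s - 1)) := ZMod.coe_unitOfCoprime _ _
  have hsmul : ∀ k : ℕ, (w ^ k) • b = (p ^ k) • b := by
    intro k
    rw [Units.smul_def, Units.val_pow_eq_pow_val, hw, ← Nat.cast_pow,
      Nat.cast_smul_eq_nsmul]
  -- injectivity of i ↦ p^i • b on Fin nb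
  have hper : ∀ i j : ℕ, i ≤ j → p ^ i • b = p ^ j • b → p ^ (j - i) • b = b := by
    intro i j hij h
    rw [← hsmul, ← hsmul] at h
    have hw2 : w ^ j = w ^ i * w ^ (j - i) := by
      rw [← pow_add, Nat.add_sub_cancel' hij]
    rw [hw2, mul_smul] at h
    have h2 : b = w ^ (j - i) • b := MulAction.injective (w ^ i) h
    rw [← hsmul]
    exact h2.symm
  have hginj : ∀ i j : Fin nb, p ^ (i : ℕ) • b = p ^ (j : ℕ) • b → i = j := by
    intro i j h
    rcases lt_trichotomy (i : ℕ) (j : ℕ) with hlt | heq | hlt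
    · have h1 := hmin ((j : ℕ) - i) (by omega) (hper _ _ hlt.le h)
      have := j.isLt
      omega
    · exact Fin.ext heq
    · have h1 := hmin ((i : ℕ) - j) (by omega) (hper _ _ hlt.le h.symm)
      have := i.isLt
      omega
  -- injectivity of i ↦ β ^ (p ^ i) on Fin nb
  have hxper : ∀ i j : ℕ, i ≤ j → j < nb → β ^ p ^ i = β ^ p ^ j → i = j := by
    intro i j hij hj h
    by_contra hne
    have hlt : i < j := lt_of_le_of_ne hij hne
    have hu' : (u : F) ^ p ^ i = (u : F) ^ p ^ j := by rw [hu]; exact h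
    have hmod : p ^ i ≡ p ^ j [MOD orderOf u] := by
      have huu : u ^ p ^ i = u ^ p ^ j := Units.ext (by
        rw [Units.val_pow_eq_pow_val, Units.val_pow_eq_pow_val]; exact hu')
      exact pow_eq_pow_iff_modEq.mp huu
    rw [← orderOf_units, hu, hord] at hmod
    have hdvd : p ^ nb - 1 ∣ p ^ j - p ^ i :=
      (Nat.modEq_iff_dvd' (Nat.pow_le_pow_right hp1.le hij)).mp hmod
    have heq : p ^ j - p ^ i = p ^ i * (p ^ (j - i) - 1) := by
      rw [Nat.mul_sub, mul_one, ← pow_add, Nat.add_sub_cancel' hij]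
    rw [heq] at hdvd
    have hcop : (p ^ nb - 1).Coprime (p ^ i) :=
      ((coprime_pow_sub_one p nb hp1.le hnb).pow_left i).symm
    have hdvd2 : p ^ nb - 1 ∣ p ^ (j - i) - 1 := hcop.dvd_of_dvd_mul_left hdvd
    have hpos2 : 0 < p ^ (j - i) - 1 := by
      have : 2 ≤ p ^ (j - i) := by
        calc 2 ≤ p := hp.two_le
        _ ≤ p ^ (j - i) := Nat.le_self_pow (by omega) p
      omega
    have hle : p ^ nb - 1 ≤ p ^ (j - i) - 1 := Nat.le_of_dvd hpos2 hdvd2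
    have h1 : 1 ≤ p ^ nb := Nat.one_le_pow _ _ hp.pos
    have h2 : 1 ≤ p ^ (j - i) := Nat.one_le_pow _ _ hp.pos
    have hle2 : p ^ nb ≤ p ^ (j - i) := by omega
    have := (Nat.pow_le_pow_iff_right hp1).mp hle2
    omega
  have hxinj : Function.Injective (fun i : Fin nb => β ^ p ^ (i : ℕ)) := by
    intro i j h
    simp only at h
    rcases le_total (i : ℕ) (j : ℕ) with hij | hij
    · exact Fin.ext (hxper _ _ hij j.isLt h)
    · exact (Fin.ext (hxper _ _ hij i.isLt h.symm)).symm
  -- evaluate fI at the point p^i0 • b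
  have hfI : ∀ (i0 : Fin nb) (γ : F),
      (fI p nb b γ).coeff (p ^ (i0 : ℕ) • b) = γ ^ p ^ (i0 : ℕ) := by
    intro i0 γ
    rw [fI, AddMonoidAlgebra.coeff_sum, Finset.sum_apply']
    rw [Finset.sum_eq_single_of_mem (i0 : ℕ) (Finset.mem_range.mpr i0.isLt)]
    · rw [AddMonoidAlgebra.coeff_single_apply, if_pos rfl]
    · intro i hi hne
      rw [AddMonoidAlgebra.coeff_single_apply, if_neg]
      intro hcond
      exact hne (congrArg Fin.val
        (hginj ⟨i, Finset.mem_range.mp hi⟩ i0 hcond))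
  -- key linear equations
  have key : ∀ i0 : Fin nb, ∑ j : Fin nb, c j * (β ^ p ^ (i0 : ℕ)) ^ (j : ℕ) = 0 := by
    intro i0
    have happ := congrArg
      (fun f : AddMonoidAlgebra F (Fin r → ZMod (p ^ s - 1)) =>
        f.coeff (p ^ (i0 : ℕ) • b)) hsum
    rw [AddMonoidAlgebra.coeff_sum, Finset.sum_apply'] at happ
    simp only [AddMonoidAlgebra.coeff_smul, AddMonoidAlgebra.coeff_zero, Finsupp.smul_apply, smul_eq_mul, Finsupp.coe_zero, Pi.zero_apply] at happ
    rw [← happ]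
    refine Finset.sum_congr rfl fun j _ => ?_
    have hrfl : (c j • fI p nb b (β ^ (j : ℕ))).coeff (p ^ (i0 : ℕ) • b)
        = c j * (fI p nb b (β ^ (j : ℕ))).coeff (p ^ (i0 : ℕ) • b) := rfl
    rw [hfI i0 (β ^ (j : ℕ)), pow_right_comm]
  -- conclude via Vandermonde
  have := Matrix.eq_zero_of_forall_index_sum_mul_pow_eq_zero
    (f := fun i : Fin nb => β ^ p ^ (i : ℕ)) (v := c) hxinj key
  exact congrFun this j0
end

section
/- If f ∈ R satisfies f^p = f and supp(f) = I_b, then the leading coefficient α of f (the coefficient of y^b) lies in F_{p^{n_b}}, i.e., α^{p^{n_b}} = α, and f = Σ_{i=0}^{n_b-1} α^{p^i} y^{b·p^i}. -/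
open scoped BigOperators

lemma amalg_pow_char {F : Type} [Field F] (p : ℕ) [Fact p.Prime] [CharP F p]
    {G : Type} [AddCommMonoid G] (f : AddMonoidAlgebra F G) :
    (f ^ p).coeff = Finsupp.mapDomain (fun x => p • x)
      (Finsupp.mapRange (· ^ p) (zero_pow (Fact.out : p.Prime).ne_zero) f.coeff) := by
  haveI : CharP (AddMonoidAlgebra F G) p :=
    charP_of_injective_ringHom
      (fun a b h => by
        have := congrArg (fun g : AddMonoidAlgebra F G => g.coeff 0) h
        simpa [AddMonoidAlgebra.singleZeroRingHom] using this :
        Function.Injective (AddMonoidAlgebra.singleZeroRingHom : F →+* AddMonoidAlgebra F G)) p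
  induction f using AddMonoidAlgebra.induction with
  | zero => simp [zero_pow (Fact.out : p.Prime).ne_zero]
  | single_add g a f hg ha ih =>
    rw [add_pow_char _ _ p, AddMonoidAlgebra.coeff_add, ih, AddMonoidAlgebra.single_pow,
      AddMonoidAlgebra.coeff_add, AddMonoidAlgebra.coeff_single,
      Finsupp.mapRange_add (fun x y => add_pow_char x y p),
      AddMonoidAlgebra.coeff_single, Finsupp.mapRange_single, Finsupp.mapDomain_add, Finsupp.mapDomain_single]

/-- If `f ∈ R` satisfies `f^p = f` and `supp(f) = I_b`, then the
leading coefficient `α` of `f` (the coefficient of `y^b`) lies in `F_{p^{n_b}}`,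
i.e. `α^{p^{n_b}} = α`, and `f = Σ_{i=0}^{n_b-1} α^{p^i} y^{b·p^i}`. -/
theorem subfield_subcodes_stmt12
    (p s r : ℕ) [Fact p.Prime] (hs : 0 < s)
    (F : Type) [Field F] [Fintype F] (hF : Fintype.card F = p ^ s)
    (b : Fin r → ZMod (p ^ s - 1))
    (nb : ℕ) (hnb : 0 < nb) (hfix : p ^ nb • b = b)
    (hmin : ∀ m : ℕ, 0 < m → p ^ m • b = b → nb ≤ m)
    (f : AddMonoidAlgebra F (Fin r → ZMod (p ^ s - 1)))
    (hf : f ^ p = f)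
    (hsupp : ((f.coeff : (Fin r → ZMod (p ^ s - 1)) →₀ F).support : Set (Fin r → ZMod (p ^ s - 1)))
      = {x | ∃ i : ℕ, x = p ^ i • b}) :
    ((f.coeff : (Fin r → ZMod (p ^ s - 1)) →₀ F) b) ^ (p ^ nb)
        = (f.coeff : (Fin r → ZMod (p ^ s - 1)) →₀ F) b ∧
      f = fI p nb b ((f.coeff : (Fin r → ZMod (p ^ s - 1)) →₀ F) b) := by
  classical
  have hp : p.Prime := Fact.out
  -- characteristic of F is p
  haveI : CharP F p := by
    obtain ⟨q, hq⟩ := CharP.exists F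
    haveI := hq
    obtain ⟨n, hqprime, hcard⟩ := FiniteField.card F q
    have hqp : q = p := by
      have hdvd : q ∣ p ^ s := by rw [← hF, hcard]; exact dvd_pow_self q n.pos.ne'
      exact (Nat.prime_dvd_prime_iff_eq hqprime hp).mp (hqprime.dvd_of_dvd_pow hdvd)
    exact hqp ▸ hq
  -- `p^s • x = x` on `G`
  have hcast : ((p ^ s : ℕ) : ZMod (p ^ s - 1)) = 1 := by
    have h1 : 1 ≤ p ^ s := Nat.one_le_pow _ _ hp.pos
    have h2 : (p ^ s : ℕ) = (p ^ s - 1) + 1 := (Nat.succ_pred_eq_of_pos h1).symm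
    rw [h2]
    push_cast
    simp
  have hps : ∀ x : Fin r → ZMod (p ^ s - 1), p ^ s • x = x := by
    intro x
    funext i
    show (p ^ s) • (x i) = x i
    rw [nsmul_eq_mul, hcast, one_mul]
  -- injectivity of multiplication by powers of p
  have inj : Function.Injective (fun x : Fin r → ZMod (p ^ s - 1) => p • x) := by
    have hli : Function.LeftInverse (fun x : Fin r → ZMod (p ^ s - 1) => p ^ (s - 1) • x) (fun x : Fin r → ZMod (p ^ s - 1) => p • x) := by
      intro x
      simp only [smul_smul]
      have : p ^ (s - 1) * p = p ^ s := by
        rw [← pow_succ, Nat.sub_add_cancel hs]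
      rw [this, hps]
    exact hli.injective
  have injpow : ∀ i : ℕ, Function.Injective (fun x : Fin r → ZMod (p ^ s - 1) => p ^ i • x) := by
    intro i
    induction i with
    | zero => intro x y h; simpa using h
    | succ i ih =>
      intro x y h
      simp only [pow_succ', mul_smul] at h
      exact ih (inj h)
  -- key coefficient identity
  have hA : ∀ g : Fin r → ZMod (p ^ s - 1), f.coeff (p • g) = (f.coeff g) ^ p := by
    intro g
    conv_lhs => rw [← hf, amalg_pow_char p f]
    rw [Finsupp.mapDomain_apply inj, Finsupp.mapRange_apply]
  have hB : ∀ i : ℕ, f.coeff (p ^ i • b) = (f.coeff b) ^ (p ^ i) := by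
    intro i
    induction i with
    | zero => simp
    | succ i ih =>
      have h1 : p ^ (i + 1) • b = p • (p ^ i • b) := by
        rw [pow_succ', mul_smul]
      rw [h1, hA, ih, ← pow_mul, ← pow_succ]
  have part1 : (f.coeff b) ^ (p ^ nb) = f.coeff b := by
    rw [← hB nb, hfix]
  refine ⟨part1, ?_⟩
  -- periodicity of the orbit
  have hq : ∀ q : ℕ, p ^ (nb * q) • b = b := by
    intro q
    induction q with
    | zero => simp
    | succ q ih =>
      rw [Nat.mul_succ, pow_add, mul_smul, hfix, ih]
  have hper : ∀ i : ℕ, p ^ i • b = p ^ (i % nb) • b := by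
    intro i
    conv_lhs => rw [← Nat.mod_add_div i nb]
    rw [pow_add, mul_smul, hq]
  -- distinctness of orbit elements
  have hd : ∀ i j : ℕ, i ≤ j → j < nb → p ^ i • b = p ^ j • b → i = j := by
    intro i j hij hjnb h
    by_contra hne
    have hpos : 0 < j - i := Nat.sub_pos_of_lt (lt_of_le_of_ne hij hne)
    have h2 : p ^ j • b = p ^ i • (p ^ (j - i) • b) := by
      rw [smul_smul, ← pow_add, Nat.add_sub_cancel' hij]
    rw [h2] at h
    have h3 : b = p ^ (j - i) • b := injpow i h
    have := hmin (j - i) hpos h3.symm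
    omega
  have hdist : ∀ i j : ℕ, i < nb → j < nb → p ^ i • b = p ^ j • b → i = j := by
    intro i j hi hj h
    rcases le_total i j with hle | hle
    · exact hd i j hle hj h
    · exact (hd j i hle hi h.symm).symm
  -- prove the equality of functions
  refine AddMonoidAlgebra.coeff_injective (Finsupp.ext fun g => ?_)
  have hRHS : (fI p nb b (f.coeff b)).coeff g
      = ∑ i ∈ Finset.range nb, if p ^ i • b = g then (f.coeff b) ^ (p ^ i) else 0 := by
    rw [fI, AddMonoidAlgebra.coeff_sum, Finsupp.finset_sum_apply]
    exact Finset.sum_congr rfl fun i _ => Finsupp.single_apply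
  rw [hRHS]
  by_cases hg : g ∈ (f.coeff : (Fin r → ZMod (p ^ s - 1)) →₀ F).support
  · have hmem : g ∈ {x : Fin r → ZMod (p ^ s - 1) | ∃ i : ℕ, x = p ^ i • b} := by
      rw [← hsupp]; exact hg
    obtain ⟨i, hi⟩ := hmem
    set j := i % nb with hj
    have hjlt : j < nb := Nat.mod_lt _ hnb
    have hgj : g = p ^ j • b := by rw [hi, hper]
    rw [Finset.sum_eq_single j]
    · rw [if_pos hgj.symm, hgj, hB]
    · intro k hk hkj
      rw [if_neg]
      intro hc
      exact hkj (hdist k j (Finset.mem_range.mp hk) hjlt (by rw [hc, hgj]))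
    · intro hj'
      exact absurd (Finset.mem_range.mpr hjlt) hj'
  · rw [Finsupp.notMem_support_iff.mp hg]
    refine (Finset.sum_eq_zero fun i _ => ?_).symm
    rw [if_neg]
    intro hc
    apply hg
    have : g ∈ {x : Fin r → ZMod (p ^ s - 1) | ∃ i : ℕ, x = p ^ i • b} := ⟨i, hc.symm⟩
    rw [← hsupp] at this
    exact this
end

section
/- The set of polynomials f ∈ R with f^p = f is an F_p-vector space with basis the union over all cyclotomic cosets I_b of {f_{I_b,β^j} : 0 ≤ j < n_b}, where β is a primitive element of F_{p^{n_b}}. In particular its F_p-dimension equals Σ_{I_b} n_b = (p^s-1)^r. -/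
open scoped BigOperators


section helpers

-- charP on AddMonoidAlgebra
lemma amaCharP {G : Type} [AddCommMonoid G] {F : Type} [Field F] (p : ℕ) [CharP F p] :
    CharP (AddMonoidAlgebra F G) p := by
  refine charP_of_injective_ringHom
    (f := (AddMonoidAlgebra.singleZeroRingHom : F →+* AddMonoidAlgebra F G)) ?_ p
  intro a b h
  have := congrArg (fun g : AddMonoidAlgebra F G => g.coeff 0) h
  simpa using this

lemma frob_coeff {G : Type} [AddCommMonoid G] {F : Type} [Field F] (p : ℕ) [Fact p.Prime]
    [CharP F p] (hinj : Function.Injective (fun x : G => p • x))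
    (f : AddMonoidAlgebra F G) (hf : f ^ p = f) (y : G) : f.coeff (p • y) = f.coeff y ^ p := by
  classical
  haveI := amaCharP (G := G) (F := F) p
  haveI : ExpChar (AddMonoidAlgebra F G) p := ExpChar.prime Fact.out
  have hpow : f ^ p = ∑ x ∈ f.coeff.support, AddMonoidAlgebra.single (p • x) (f.coeff x ^ p) := by
    conv_lhs => rw [← AddMonoidAlgebra.sum_coeff_single f]
    rw [Finsupp.sum, sum_pow_char]
    exact Finset.sum_congr rfl fun x _ => AddMonoidAlgebra.single_pow _ _ p
  have h2 : f.coeff (p • y) = (∑ x ∈ f.coeff.support, AddMonoidAlgebra.single (p • x) (f.coeff x ^ p)).coeff (p • y) := by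
    rw [← hpow, hf]
  rw [AddMonoidAlgebra.coeff_sum, Finsupp.finset_sum_apply] at h2
  have h3 : ∀ x ∈ f.coeff.support,
      (AddMonoidAlgebra.single (p • x) (f.coeff x ^ p) : AddMonoidAlgebra F G).coeff (p • y)
        = if x = y then f.coeff x ^ p else 0 := by
    intro x _
    rw [AddMonoidAlgebra.coeff_single, Finsupp.single_apply]
    congr 1
    simp only [eq_iff_iff]
    exact ⟨fun h => hinj h, fun h => by rw [h]⟩
  rw [Finset.sum_congr rfl h3, Finset.sum_ite_eq' f.coeff.support y (fun x => f.coeff x ^ p)] at h2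
  by_cases hy : y ∈ f.coeff.support
  · rwa [if_pos hy] at h2
  · rw [if_neg hy] at h2
    rw [h2, Finsupp.notMem_support_iff.mp hy, zero_pow (Nat.Prime.ne_zero Fact.out)]

lemma frob_coeff_iter {G : Type} [AddCommMonoid G] {F : Type} [Field F] (p : ℕ) [Fact p.Prime]
    [CharP F p] (hinj : Function.Injective (fun x : G => p • x))
    (f : AddMonoidAlgebra F G) (hf : f ^ p = f) (y : G) (i : ℕ) :
    f.coeff ((p : ℕ) ^ i • y) = f.coeff y ^ p ^ i := by
  induction i with
  | zero => simp
  | succ i ih =>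
    have h1 : p ^ (i + 1) • y = p • (p ^ i • y) := by rw [← mul_smul, pow_succ']
    rw [h1, frob_coeff p hinj f hf, ih, ← pow_mul, pow_succ']
    ring_nf

end helpers


open Polynomial in
lemma field_aux (p nn : ℕ) [Fact p.Prime] {F : Type} [Field F] [Fintype F] [CharP F p]
    (hnn : 0 < nn) (β : F) (hβ1 : β ^ p ^ nn = β) (hβ2 : orderOf β = p ^ nn - 1) :
    (∀ c : Fin nn → ZMod p, ∑ j, (ZMod.castHom dvd_rfl F) (c j) * β ^ (j : ℕ) = 0 → c = 0) ∧
    (∀ a : F, a ^ p ^ nn = a → ∃ c : Fin nn → ZMod p,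
      a = ∑ j, (ZMod.castHom dvd_rfl F) (c j) * β ^ (j : ℕ)) := by
  classical
  letI : Algebra (ZMod p) F := ZMod.algebra F p
  have halg : ∀ c : ZMod p, algebraMap (ZMod p) F c = ZMod.castHom dvd_rfl F c := fun _ => rfl
  have hp2 : 2 ≤ p := (Fact.out : p.Prime).two_le
  have hpn2 : 2 ≤ p ^ nn := le_trans hp2 (Nat.le_self_pow hnn.ne' p)
  have hβne : β ≠ 0 := by
    intro h
    have h1 : β ^ (p ^ nn - 1) = 1 := hβ2 ▸ pow_orderOf_eq_one β
    rw [h, zero_pow (by omega)] at h1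
    exact zero_ne_one h1
  -- the adjoin subalgebra
  have hint : IsIntegral (ZMod p) β := IsIntegral.of_finite (ZMod p) β
  set R0 : Subalgebra (ZMod p) F := Algebra.adjoin (ZMod p) {β} with hR0def
  have hR0S : ∀ x ∈ R0, x ^ p ^ nn = x := by
    intro x hx
    induction hx using Algebra.adjoin_induction with
    | mem y hy => rw [Set.mem_singleton_iff] at hy; rw [hy]; exact hβ1
    | algebraMap c => rw [← map_pow, ZMod.pow_card_pow]
    | add y z _ _ hy hz => rw [add_pow_char_pow, hy, hz]
    | mul y z _ _ hy hz => rw [mul_pow, hy, hz]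
  haveI : Fintype R0 := Fintype.ofFinite _
  -- roots finset
  set Q : F[X] := X ^ (p ^ nn) - X with hQdef
  have hQdeg : Q.degree = (p ^ nn : ℕ) := by
    have h1 : (X : F[X]).degree < ((X : F[X]) ^ (p ^ nn)).degree := by
      rw [degree_X, degree_X_pow]
      exact_mod_cast by omega
    rw [hQdef, degree_sub_eq_left_of_degree_lt h1, degree_X_pow]
  have hQne : Q ≠ 0 := by
    have : Q.Monic := monic_X_pow_sub (by rw [degree_X]; exact_mod_cast by omega)
    exact this.ne_zero
  have hmemroots : ∀ x : F, x ^ p ^ nn = x → x ∈ Q.roots.toFinset := by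
    intro x hx
    rw [Multiset.mem_toFinset, mem_roots hQne]
    simp [hQdef, IsRoot, sub_eq_zero, hx]
  have hcardroots : Q.roots.toFinset.card ≤ p ^ nn := by
    calc Q.roots.toFinset.card ≤ Multiset.card Q.roots := Q.roots.toFinset_card_le
    _ ≤ Q.natDegree := Q.card_roots' 
    _ = p ^ nn := natDegree_eq_of_degree_eq_some hQdeg
  -- powers of β are distinct
  have hpowinj : ∀ i < p ^ nn - 1, ∀ j < p ^ nn - 1, β ^ i = β ^ j → i = j := by
    have key : ∀ i j, i ≤ j → j < p ^ nn - 1 → β ^ i = β ^ j → i = j := by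
      intro i j hij hj h
      by_contra hne
      have h1 : β ^ i * β ^ (j - i) = β ^ i * 1 := by
        rw [mul_one, ← pow_add]; rw [h]; congr 1; omega
      have h2 : β ^ (j - i) = 1 := mul_left_cancel₀ (pow_ne_zero _ hβne) h1
      have := orderOf_le_of_pow_eq_one (n := j - i) (by omega) h2
      omega
    intro i hi j hj h
    rcases le_total i j with hle | hle
    · exact key i j hle hj h
    · exact (key j i hle hi h.symm).symm
  set R0fin : Finset F := Set.toFinset (R0 : Set F) with hR0fin
  have hmemfin : ∀ x : F, x ∈ R0fin ↔ x ∈ R0 := by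
    intro x; rw [hR0fin, Set.mem_toFinset]; rfl
  -- card R0 = p ^ nn
  set S0 : Finset F := insert 0 ((Finset.range (p ^ nn - 1)).image (β ^ ·)) with hS0def
  have hS0card : S0.card = p ^ nn := by
    rw [hS0def, Finset.card_insert_of_notMem, Finset.card_image_of_injOn, Finset.card_range]
    · omega
    · intro i hi j hj h
      exact hpowinj i (Finset.mem_range.mp hi) j (Finset.mem_range.mp hj) h
    · simp only [Finset.mem_image, Finset.mem_range]
      rintro ⟨i, -, h⟩
      exact pow_ne_zero i hβne h
  have hS0sub : S0 ⊆ R0fin := by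
    intro x hx
    rw [hmemfin]
    rw [hS0def] at hx
    rcases Finset.mem_insert.mp hx with rfl | hx
    · exact zero_mem R0
    · obtain ⟨i, -, rfl⟩ := Finset.mem_image.mp hx
      exact pow_mem (Algebra.self_mem_adjoin_singleton (ZMod p) β) i
  have hR0subroots : R0fin ⊆ Q.roots.toFinset := by
    intro x hx
    exact hmemroots x (hR0S x ((hmemfin x).mp hx))
  have hcardR0 : R0fin.card = p ^ nn := le_antisymm
    (le_trans (Finset.card_le_card hR0subroots) hcardroots)
    (hS0card ▸ Finset.card_le_card hS0sub)
  have hrootseq : R0fin = Q.roots.toFinset :=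
    Finset.eq_of_subset_of_card_le hR0subroots (by omega)
  -- finrank
  have hcardR0' : Fintype.card R0 = p ^ nn := by
    rw [← hcardR0, hR0fin, Set.toFinset_card]
    exact (Fintype.card_congr (Equiv.refl _)).symm
  have hfinrank : (minpoly (ZMod p) β).natDegree = nn := by
    have h1 : Fintype.card R0 = p ^ Module.finrank (ZMod p) R0 := by
      have := Module.card_eq_pow_finrank (K := ZMod p) (V := R0)
      rwa [ZMod.card] at this
    have h2 : Module.finrank (ZMod p) R0 = (minpoly (ZMod p) β).natDegree := by
      rw [(Algebra.adjoin.powerBasis hint).finrank]; rfl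
    rw [hcardR0', h2] at h1
    exact (Nat.pow_right_injective hp2 h1).symm
  constructor
  · -- linear independence
    intro c hc
    set P : (ZMod p)[X] := ∑ j : Fin nn, monomial (j : ℕ) (c j) with hPdef
    have hPaeval : aeval β P = 0 := by
      rw [hPdef, map_sum]
      simpa [aeval_monomial, halg] using hc
    have hPdeg : P.degree < (nn : ℕ) := by
      refine lt_of_le_of_lt (degree_sum_le _ _) ?_
      rw [Finset.sup_lt_iff (by exact_mod_cast WithBot.bot_lt_coe nn)]
      intro j _
      exact lt_of_le_of_lt (degree_monomial_le _ _) (by exact_mod_cast j.isLt)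
    have hP0 : P = 0 := by
      by_contra hP0
      have := minpoly.degree_le_of_ne_zero (ZMod p) β hP0 hPaeval
      rw [degree_eq_natDegree (minpoly.ne_zero hint), hfinrank] at this
      exact absurd (lt_of_le_of_lt this hPdeg) (lt_irrefl _)
    funext j
    have := congrArg (fun q => Polynomial.coeff q (j : ℕ)) hP0
    simpa [hPdef, coeff_monomial, Fin.val_eq_val] using this
  · -- spanning
    intro a ha
    have haR0 : a ∈ R0 := by
      have : a ∈ R0fin := hrootseq ▸ hmemroots a ha
      exact (hmemfin a).mp this
    rw [hR0def, Algebra.adjoin_singleton_eq_range_aeval, AlgHom.mem_range] at haR0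
    obtain ⟨P, hP⟩ := haR0
    set Rm := P %ₘ minpoly (ZMod p) β with hRmdef
    have hmon := minpoly.monic hint
    have haRm : aeval β Rm = a := by
      rw [hRmdef, modByMonic_eq_sub_mul_div P (minpoly (ZMod p) β), map_sub, map_mul, minpoly.aeval, zero_mul,
        sub_zero, hP]
    have hRmdeg : Rm.natDegree < nn := by
      rcases eq_or_ne Rm 0 with h | h
      · rw [h]; simpa using hnn
      · rw [← hfinrank]
        have := degree_modByMonic_lt P hmon
        rw [← hRmdef, degree_eq_natDegree (minpoly.ne_zero hint)] at this
        exact_mod_cast lt_of_lt_of_le (degree_eq_natDegree h ▸ this) le_rfl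
    refine ⟨fun j => Rm.coeff (j : ℕ), ?_⟩
    rw [← haRm, aeval_eq_sum_range' hRmdeg, ← Fin.sum_univ_eq_sum_range]
    exact Finset.sum_congr rfl fun j _ => by rw [Algebra.smul_def, halg]

/-- The set of `f ∈ R` with `f^p = f` (the polynomials evaluating
to `F_p`) is an `F_p`-vector space with basis the union, over a set `J` of
representatives of the cyclotomic cosets (of sizes `n b`), of
`{f_{I_b,β_b^j} : 0 ≤ j < n b}` where `β_b` is a primitive element of `F_{p^{n b}}`:
the family is linearly independent over the prime subfield, spans the fixed set, and
the dimension count gives `Σ_b n b = (p^s-1)^r`. -/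
theorem subfield_subcodes_stmt13
    (p s r : ℕ) [Fact p.Prime] (hs : 0 < s)
    (F : Type) [Field F] [Fintype F] (hF : Fintype.card F = p ^ s)
    (n : (Fin r → ZMod (p ^ s - 1)) → ℕ)
    (hn : ∀ b, 0 < n b ∧ p ^ n b • b = b ∧ ∀ m : ℕ, 0 < m → p ^ m • b = b → n b ≤ m)
    (J : Finset (Fin r → ZMod (p ^ s - 1)))
    (hJ : ∀ x : Fin r → ZMod (p ^ s - 1), ∃! b, b ∈ J ∧ ∃ i : ℕ, x = p ^ i • b)
    (β : (Fin r → ZMod (p ^ s - 1)) → F)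
    (hβ : ∀ b ∈ J, (β b) ^ (p ^ n b) = β b ∧ orderOf (β b) = p ^ n b - 1) :
    (∀ c : ((b : {x // x ∈ J}) × Fin (n b)) → F,
        (∀ k, c k ∈ (⊥ : Subfield F)) →
        ∑ k : (b : {x // x ∈ J}) × Fin (n b),
          c k • fI p (n k.1) (k.1 : Fin r → ZMod (p ^ s - 1)) ((β k.1) ^ (k.2 : ℕ)) = 0 →
        c = 0) ∧
    (∀ f : AddMonoidAlgebra F (Fin r → ZMod (p ^ s - 1)), f ^ p = f →
        ∃ c : ((b : {x // x ∈ J}) × Fin (n b)) → F,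
          (∀ k, c k ∈ (⊥ : Subfield F)) ∧
          f = ∑ k : (b : {x // x ∈ J}) × Fin (n b),
            c k • fI p (n k.1) (k.1 : Fin r → ZMod (p ^ s - 1)) ((β k.1) ^ (k.2 : ℕ))) ∧
    ∑ b ∈ J, n b = (p ^ s - 1) ^ r := by
  classical
  have hp : p.Prime := Fact.out
  have hp2 : 2 ≤ p := hp.two_le
  have hps : 2 ≤ p ^ s := le_trans hp2 (Nat.le_self_pow hs.ne' p)
  haveI : NeZero (p ^ s - 1) := ⟨by omega⟩
  -- characteristic
  haveI hFp : CharP F p := by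
    haveI := ringChar.charP F
    have hq : (ringChar F).Prime := CharP.char_is_prime F (ringChar F)
    have hdvd : ringChar F ∣ p ^ s := by
      rw [← hF]
      exact (CharP.cast_eq_zero_iff F (ringChar F) (Fintype.card F)).mp
        (FiniteField.cast_card_eq_zero F)
    have : ringChar F = p := (Nat.prime_dvd_prime_iff_eq hq hp).mp (hq.dvd_of_dvd_pow hdvd)
    exact this ▸ ringChar.charP F
  haveI : ExpChar F p := ExpChar.prime hp
  -- p is invertible mod p^s - 1
  have hinj : Function.Injective (fun x : (Fin r → ZMod (p ^ s - 1)) => p • x) := by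
    have hu : IsUnit (p : ZMod (p ^ s - 1)) := by
      rw [ZMod.isUnit_prime_iff_not_dvd hp]
      intro hdvd
      have h1 : p ∣ p ^ s := dvd_pow_self p hs.ne'
      have h2 := Nat.dvd_sub h1 hdvd
      have h3 : p ^ s - (p ^ s - 1) = 1 := by omega
      rw [h3] at h2
      exact absurd (Nat.le_of_dvd one_pos h2) (by omega)
    intro x y h
    funext j
    have h1 : p • x j = p • y j := congrFun h j
    rw [nsmul_eq_mul, nsmul_eq_mul] at h1
    exact hu.mul_left_cancel h1
  have hinjpow : ∀ i, Function.Injective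
      (fun x : (Fin r → ZMod (p ^ s - 1)) => p ^ i • x) := by
    intro i
    induction i with
    | zero => intro x y h; simpa using h
    | succ i ih =>
      intro x y h
      simp only [pow_succ, mul_smul] at h
      exact hinj (ih h)
  -- uniqueness of coset representation
  have hper : ∀ (b : Fin r → ZMod (p ^ s - 1)) (q : ℕ), p ^ (n b * q) • b = b := by
    intro b q
    induction q with
    | zero => simp
    | succ q ih =>
      have : n b * (q + 1) = n b * q + n b := by ring
      rw [this, pow_add, mul_smul, (hn b).2.1, ih]
  have huniq : ∀ b ∈ J, ∀ b' ∈ J, ∀ i i' : ℕ, i < n b → i' < n b' →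
      p ^ i • b = p ^ i' • b' → b = b' ∧ i = i' := by
    have haux : ∀ (b : Fin r → ZMod (p ^ s - 1)), ∀ i i' : ℕ, i ≤ i' → i' < n b →
        p ^ i • b = p ^ i' • b → i = i' := by
      intro b i i' hle hlt hE
      by_contra hne
      have h1 : p ^ i' • b = p ^ i • (p ^ (i' - i) • b) := by
        rw [← mul_smul, ← pow_add, Nat.add_sub_cancel' hle]
      rw [h1] at hE
      have h2 : b = p ^ (i' - i) • b := hinjpow i hE
      have h3 := (hn b).2.2 (i' - i) (by omega) h2.symm
      omega
    intro b hb b' hb' i i' hi hi' hE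
    have hbb : b = b' := by
      have h1 := (hJ (p ^ i • b)).unique ⟨hb, i, rfl⟩ ⟨hb', i', hE⟩
      exact h1
    subst hbb
    refine ⟨rfl, ?_⟩
    rcases le_total i i' with hle | hle
    · exact haux b i i' hle hi' hE
    · exact (haux b i' i hle hi hE.symm).symm
  -- bounded representation
  have hsurj : ∀ x : Fin r → ZMod (p ^ s - 1), ∃ b, b ∈ J ∧ ∃ i, i < n b ∧ x = p ^ i • b := by
    intro x
    obtain ⟨b, ⟨hb, i, rfl⟩, -⟩ := hJ x
    refine ⟨b, hb, i % n b, Nat.mod_lt i (hn b).1, ?_⟩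
    conv_lhs => rw [← Nat.div_add_mod i (n b)]
    rw [pow_add, mul_comm, mul_smul, hper b (i / n b)]
  -- prime subfield helpers
  have hbotmem : ∀ c : ZMod p, (ZMod.castHom dvd_rfl F) c ∈ (⊥ : Subfield F) := by
    intro c
    haveI : NeZero p := ⟨hp.pos.ne'⟩
    obtain ⟨k, rfl⟩ := (ZMod.natCast_rightInverse (n := p)).surjective c
    rw [map_natCast]
    exact natCast_mem (⊥ : Subfield F) k
  have hbotrep : ∀ x ∈ (⊥ : Subfield F), ∃ c : ZMod p, (ZMod.castHom dvd_rfl F) c = x := by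
    intro x hx
    have h1 : x ∈ (ZMod.castHom (dvd_refl p) F).fieldRange :=
      (bot_le : (⊥ : Subfield F) ≤ _) hx
    exact RingHom.mem_fieldRange.mp h1
  have hfix : ∀ x ∈ (⊥ : Subfield F), ∀ i : ℕ, x ^ p ^ i = x := by
    intro x hx i
    obtain ⟨c, rfl⟩ := hbotrep x hx
    rw [← map_pow, ZMod.pow_card_pow]
  -- the key sum rearrangement
  have hsum : ∀ (c : ((b : {x // x ∈ J}) × Fin (n b)) → F), (∀ k, c k ∈ (⊥ : Subfield F)) →
      ∑ k : (b : {x // x ∈ J}) × Fin (n b),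
        c k • fI p (n k.1) (k.1 : Fin r → ZMod (p ^ s - 1)) ((β k.1) ^ (k.2 : ℕ))
      = ∑ b : {x // x ∈ J}, ∑ i ∈ Finset.range (n (b : Fin r → ZMod (p ^ s - 1))),
          AddMonoidAlgebra.single (p ^ i • (b : Fin r → ZMod (p ^ s - 1)))
            ((∑ j : Fin (n (b : Fin r → ZMod (p ^ s - 1))), c ⟨b, j⟩ * (β b) ^ (j : ℕ)) ^ p ^ i) := by
    intro c hc
    rw [← Finset.univ_sigma_univ, Finset.sum_sigma]
    refine Finset.sum_congr rfl fun b _ => ?_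
    have h1 : ∀ j : Fin (n (b : Fin r → ZMod (p ^ s - 1))),
        c ⟨b, j⟩ • fI p (n (b : Fin r → ZMod (p ^ s - 1))) (b : Fin r → ZMod (p ^ s - 1)) ((β b) ^ (j : ℕ))
        = ∑ i ∈ Finset.range (n (b : Fin r → ZMod (p ^ s - 1))),
            AddMonoidAlgebra.single (p ^ i • (b : Fin r → ZMod (p ^ s - 1)))
              (c ⟨b, j⟩ * ((β b) ^ (j : ℕ)) ^ p ^ i) := by
      intro j
      rw [fI, Finset.smul_sum]
      exact Finset.sum_congr rfl fun i _ => AddMonoidAlgebra.smul_single' _ _ _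
    rw [Finset.sum_congr rfl fun j _ => h1 j, Finset.sum_comm]
    refine Finset.sum_congr rfl fun i _ => ?_
    rw [sum_pow_char_pow]
    refine Eq.trans ?_ (map_sum (AddMonoidAlgebra.singleAddHom (p ^ i • (b : Fin r → ZMod (p ^ s - 1))))
      (fun j : Fin (n (b : Fin r → ZMod (p ^ s - 1))) => (c ⟨b, j⟩ * β (b : Fin r → ZMod (p ^ s - 1)) ^ (j : ℕ)) ^ p ^ i)
      (Finset.univ)).symm
    refine Finset.sum_congr rfl fun j _ => ?_
    rw [mul_pow, hfix _ (hc ⟨b, j⟩) i]; rfl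
  -- evaluation of the rearranged sum
  have heval : ∀ (A : {x // x ∈ J} → F) (b₀ : Fin r → ZMod (p ^ s - 1)) (hb₀ : b₀ ∈ J)
      (i₀ : ℕ) (hi₀ : i₀ < n b₀),
      (∑ b : {x // x ∈ J}, ∑ i ∈ Finset.range (n (b : Fin r → ZMod (p ^ s - 1))),
        AddMonoidAlgebra.single (p ^ i • (b : Fin r → ZMod (p ^ s - 1))) ((A b) ^ p ^ i)).coeff
        (p ^ i₀ • b₀)
      = A ⟨b₀, hb₀⟩ ^ p ^ i₀ := by
    intro A b₀ hb₀ i₀ hi₀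
    rw [AddMonoidAlgebra.coeff_sum, Finsupp.finset_sum_apply]
    rw [Finset.sum_eq_single_of_mem ⟨b₀, hb₀⟩ (Finset.mem_univ _) ?hout]
    case hout =>
      intro b' _ hne
      rw [AddMonoidAlgebra.coeff_sum, Finsupp.finset_sum_apply]
      refine Finset.sum_eq_zero fun i hi => ?_
      rw [AddMonoidAlgebra.coeff_single, Finsupp.single_apply, if_neg]
      intro hEq
      exact hne (Subtype.ext (huniq _ b'.2 _ hb₀ i i₀ (Finset.mem_range.mp hi) hi₀ hEq).1)
    rw [AddMonoidAlgebra.coeff_sum, Finsupp.finset_sum_apply]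
    rw [Finset.sum_eq_single_of_mem i₀ (Finset.mem_range.mpr hi₀) ?hin]
    case hin =>
      intro i hi hne
      rw [AddMonoidAlgebra.coeff_single, Finsupp.single_apply, if_neg]
      intro hEq
      exact hne (huniq _ hb₀ _ hb₀ i i₀ (Finset.mem_range.mp hi) hi₀ hEq).2
    rw [AddMonoidAlgebra.coeff_single, Finsupp.single_apply, if_pos rfl]
  refine ⟨?_, ?_, ?_⟩
  · -- linear independence
    intro c hc h0
    rw [hsum c hc] at h0
    funext k
    obtain ⟨b, j⟩ := k
    have hA : (∑ jj : Fin (n (b : Fin r → ZMod (p ^ s - 1))), c ⟨b, jj⟩ * β b ^ (jj : ℕ)) = 0 := by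
      have h1 := heval
        (fun b' => ∑ jj : Fin (n (b' : Fin r → ZMod (p ^ s - 1))), c ⟨b', jj⟩ * β b' ^ (jj : ℕ))
        b b.2 0 (hn _).1
      simp only at h1
      rw [h0] at h1
      simpa using h1.symm
    choose cc hcc using fun jj : Fin (n (b : Fin r → ZMod (p ^ s - 1))) =>
      hbotrep (c ⟨b, jj⟩) (hc ⟨b, jj⟩)
    have hcc0 : cc = 0 := by
      refine (field_aux p (n (b : Fin r → ZMod (p ^ s - 1))) (hn _).1 (β b)
        (hβ b b.2).1 (hβ b b.2).2).1 cc ?_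
      exact (Finset.sum_congr rfl fun jj _ => by rw [hcc jj]).trans hA
    have := hcc j
    rw [hcc0] at this
    simpa using this.symm
  · -- spanning
    intro f hf
    have ha : ∀ b : {x // x ∈ J},
        (f.coeff ((b : Fin r → ZMod (p ^ s - 1)))) ^ p ^ (n (b : Fin r → ZMod (p ^ s - 1)))
          = f.coeff (b : Fin r → ZMod (p ^ s - 1)) := by
      intro b
      have h1 := frob_coeff_iter p hinj f hf (b : Fin r → ZMod (p ^ s - 1))
        (n (b : Fin r → ZMod (p ^ s - 1)))
      rw [(hn _).2.1] at h1
      exact h1.symm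
    choose cc hcc using fun b : {x // x ∈ J} =>
      (field_aux p (n (b : Fin r → ZMod (p ^ s - 1))) (hn _).1 (β b)
        (hβ b b.2).1 (hβ b b.2).2).2 (f.coeff (b : Fin r → ZMod (p ^ s - 1))) (ha b)
    refine ⟨fun k => (ZMod.castHom dvd_rfl F) (cc k.1 k.2), fun k => hbotmem _, ?_⟩
    rw [hsum _ (fun k => hbotmem _)]
    refine AddMonoidAlgebra.ext (Finsupp.ext fun x => ?_)
    obtain ⟨b₀, hb₀, i₀, hi₀, rfl⟩ := hsurj x
    rw [heval (fun b => ∑ j : Fin (n (b : Fin r → ZMod (p ^ s - 1))),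
      (ZMod.castHom dvd_rfl F) (cc b j) * β b ^ (j : ℕ)) b₀ hb₀ i₀ hi₀]
    rw [← hcc ⟨b₀, hb₀⟩]
    exact frob_coeff_iter p hinj f hf b₀ i₀
  · -- dimension count
    have hcover : (Finset.univ : Finset (Fin r → ZMod (p ^ s - 1)))
        = J.biUnion (fun b => (Finset.range (n b)).image (fun i => p ^ i • b)) := by
      ext x
      simp only [Finset.mem_univ, true_iff, Finset.mem_biUnion, Finset.mem_image,
        Finset.mem_range]
      obtain ⟨b, hb, i, hi, rfl⟩ := hsurj x
      exact ⟨b, hb, i, hi, rfl⟩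
    have hdisj : ∀ b ∈ J, ∀ b' ∈ J, b ≠ b' →
        Disjoint ((Finset.range (n b)).image (fun i => p ^ i • b))
          ((Finset.range (n b')).image (fun i => p ^ i • b')) := by
      intro b hb b' hb' hne
      rw [Finset.disjoint_left]
      intro x hx hx'
      obtain ⟨i, hi, rfl⟩ := Finset.mem_image.mp hx
      obtain ⟨i', hi', hE⟩ := Finset.mem_image.mp hx'
      exact hne (huniq b hb b' hb' i i' (Finset.mem_range.mp hi) (Finset.mem_range.mp hi')
        hE.symm).1
    have hthis := congrArg Finset.card hcover
    rw [Finset.card_biUnion hdisj] at hthis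
    have hcardim : ∀ b ∈ J, ((Finset.range (n b)).image (fun i => p ^ i • b)).card = n b := by
      intro b hb
      rw [Finset.card_image_of_injOn, Finset.card_range]
      intro i hi i' hi' hE
      exact (huniq b hb b hb i i' (Finset.mem_range.mp hi) (Finset.mem_range.mp hi') hE).2
    rw [Finset.sum_congr rfl hcardim, Finset.card_univ] at hthis
    have hcardG : Fintype.card (Fin r → ZMod (p ^ s - 1)) = (p ^ s - 1) ^ r := by
      rw [Fintype.card_fun, ZMod.card, Fintype.card_fin]
    rw [hcardG] at hthis
    exact hthis.symm
end

section
/- For b ∈ (Z/(p^s-1))^r and γ ∈ F_{p^s}, one has T(γ y^b) = Σ_{i=0}^{n_b-1} β^{p^i} y^{b·p^i} = f_{I_b,β}, where β = Tr_{F_{p^s}/F_{p^{n_b}}}(γ) is the relative trace of γ. -/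
open scoped BigOperators

/-- For `b ∈ (ℤ/(p^s-1))^r` with coset size `n_b` and `γ ∈ F_{p^s}`,
`T(γ y^b) = Σ_{i=0}^{n_b-1} β^{p^i} y^{b·p^i} = f_{I_b,β}`, where
`β = Tr_{F_{p^s}/F_{p^{n_b}}}(γ) = Σ_{j=0}^{s/n_b - 1} γ^{p^{n_b·j}}`. -/
theorem subfield_subcodes_stmt15
    (p s r : ℕ) [Fact p.Prime] (hs : 0 < s)
    (F : Type) [Field F] [Fintype F] (hF : Fintype.card F = p ^ s)
    (b : Fin r → ZMod (p ^ s - 1))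
    (nb : ℕ) (hnb : 0 < nb) (hfix : p ^ nb • b = b)
    (hmin : ∀ m : ℕ, 0 < m → p ^ m • b = b → nb ≤ m)
    (γ : F) :
    ∑ i ∈ Finset.range s,
        (AddMonoidAlgebra.single b γ : AddMonoidAlgebra F (Fin r → ZMod (p ^ s - 1))) ^ (p ^ i)
      = fI p nb b (∑ j ∈ Finset.range (s / nb), γ ^ (p ^ (nb * j))) := by
  have hp := (inferInstance : Fact p.Prime).out
  -- characteristic of F is p
  haveI : CharP F (ringChar F) := ringChar.charP F
  obtain ⟨n, hq, hcard⟩ := FiniteField.card F (ringChar F)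
  haveI : CharP F p := by
    have hdvd : p ∣ ringChar F ^ (n : ℕ) := by
      rw [← hcard, hF]; exact dvd_pow_self p hs.ne'
    have : p = ringChar F :=
      ((Nat.prime_dvd_prime_iff_eq hp hq).mp (hp.dvd_of_dvd_pow hdvd))
    rw [this]; exact ringChar.charP F
  -- b is fixed by p^(nb*j)
  have hfixmul : ∀ j : ℕ, p ^ (nb * j) • b = b := by
    intro j
    induction j with
    | zero => simp
    | succ j ih =>
      rw [Nat.mul_succ, pow_add, mul_smul, hfix, ih]
  -- p^s • b = b
  have hps : p ^ s • b = b := by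
    have h1 : (1 : ℕ) ≤ p ^ s := Nat.one_le_pow _ _ hp.pos
    have : p ^ s = (p ^ s - 1) + 1 := (Nat.succ_pred_eq_of_pos h1).symm
    funext k
    show (p ^ s : ℕ) • b k = b k
    have hc : ((p ^ s : ℕ) : ZMod (p ^ s - 1)) = 1 := by
      rw [this, Nat.cast_add, Nat.cast_one, ZMod.natCast_self, zero_add]
    rw [nsmul_eq_mul, hc, one_mul]
  -- nb divides s
  have hdvd : nb ∣ s := by
    by_contra h
    have hr : s % nb ≠ 0 := fun h0 => h (Nat.dvd_of_mod_eq_zero h0)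
    have hfixr : p ^ (s % nb) • b = b := by
      have := hfixmul (s / nb)
      calc p ^ (s % nb) • b = p ^ (s % nb) • (p ^ (nb * (s / nb)) • b) := by rw [this]
        _ = p ^ (s % nb + nb * (s / nb)) • b := by rw [← mul_smul, ← pow_add]
        _ = p ^ (nb * (s / nb) + s % nb) • b := by rw [Nat.add_comm]
        _ = p ^ s • b := by rw [Nat.div_add_mod]
        _ = b := hps
    exact absurd (hmin _ (Nat.pos_of_ne_zero hr) hfixr) (Nat.not_le.mpr (Nat.mod_lt _ hnb))
  -- rewrite both sides
  simp only [AddMonoidAlgebra.single_pow, fI]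
  have key : ∀ j k : ℕ, p ^ (nb * j + k) • b = p ^ k • b := by
    intro j k
    rw [pow_add, mul_comm (p ^ (nb * j)), mul_smul, hfixmul]
  calc ∑ i ∈ Finset.range s, AddMonoidAlgebra.single (p ^ i • b) (γ ^ p ^ i)
      = ∑ x ∈ Finset.range nb ×ˢ Finset.range (s / nb),
          AddMonoidAlgebra.single (p ^ x.1 • b) (γ ^ p ^ (nb * x.2 + x.1)) := by
        refine Finset.sum_nbij' (fun i => (i % nb, i / nb)) (fun x => nb * x.2 + x.1)
          ?_ ?_ ?_ ?_ ?_
        · intro a ha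
          simp only [Finset.mem_product, Finset.mem_range] at *
          exact ⟨Nat.mod_lt _ hnb, Nat.div_lt_div_of_lt_of_dvd hdvd ha⟩
        · intro a ha
          simp only [Finset.mem_product, Finset.mem_range] at *
          calc nb * a.2 + a.1 < nb * a.2 + nb := by omega
            _ ≤ nb * (s / nb) := by rw [← Nat.mul_succ]; exact Nat.mul_le_mul_left nb ha.2
            _ = s := Nat.mul_div_cancel' hdvd
        · intro a _
          exact Nat.div_add_mod a nb
        · intro a ha
          simp only [Finset.mem_product, Finset.mem_range] at ha
          have h1 : (nb * a.2 + a.1) % nb = a.1 := by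
            rw [Nat.mul_add_mod, Nat.mod_eq_of_lt ha.1]
          have h2 : (nb * a.2 + a.1) / nb = a.2 := by
            rw [Nat.mul_add_div hnb, Nat.div_eq_of_lt ha.1, Nat.add_zero]
          exact Prod.ext h1 h2
        · intro a _
          have ha' := key (a / nb) (a % nb)
          rw [Nat.div_add_mod] at ha'
          simp only [ha', Nat.div_add_mod]
    _ = ∑ k ∈ Finset.range nb, ∑ j ∈ Finset.range (s / nb),
          AddMonoidAlgebra.single (p ^ k • b) (γ ^ p ^ (nb * j + k)) := by
        rw [Finset.sum_product]
    _ = ∑ k ∈ Finset.range nb, AddMonoidAlgebra.single (p ^ k • b)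
          ((∑ j ∈ Finset.range (s / nb), γ ^ p ^ (nb * j)) ^ p ^ k) := by
        refine Finset.sum_congr rfl fun k _ => ?_
        rw [sum_pow_char_pow, ← AddMonoidAlgebra.singleAddHom_apply, map_sum]
        refine Finset.sum_congr rfl fun j _ => ?_
        rw [AddMonoidAlgebra.singleAddHom_apply, ← pow_mul, ← pow_add]
end

section
/- Let U ⊆ {0,...,p^s-2}^r and D_U = C_U ∩ F_p^n be the subfield-subcode of the generalized toric code C_U over F_{p^s}. Then dim_{F_p} D_U = Σ n_b, the sum over all cyclotomic cosets I_b entirely contained in U of their sizes n_b. -/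
open scoped BigOperators Classical

namespace Stmt16




-- basic smul arithmetic on H := Fin r → ZMod (p^s-1)
theorem smul_cast {M : ℕ} {r : ℕ} (k : ℕ) (x : Fin r → ZMod M) (j : Fin r) :
    (k • x) j = (k : ZMod M) * x j := by
  simp [nsmul_eq_mul]

theorem smul_ps {p s r : ℕ} (h2 : 1 ≤ p ^ s) (x : Fin r → ZMod (p ^ s - 1)) :
    p ^ s • x = x := by
  funext j
  rw [smul_cast]
  have : ((p ^ s : ℕ) : ZMod (p ^ s - 1)) = 1 := by
    have : p ^ s = (p ^ s - 1) + 1 := by omega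
    rw [this]
    push_cast
    simp [ZMod.natCast_self]
  rw [this, one_mul]

theorem smul_ps_mul {p s r : ℕ} (h2 : 1 ≤ p ^ s) (k : ℕ) (x : Fin r → ZMod (p ^ s - 1)) :
    p ^ (s * k) • x = x := by
  induction k with
  | zero => simp
  | succ k ih =>
    have : s * (k + 1) = s * k + s := by ring
    rw [this, pow_add, mul_smul, smul_ps h2, ih]

/-- cancellation: from `p^i • b = p^j • b` with `i ≤ j` deduce `p^(j-i) • b = b`. -/
theorem smul_cancel {p s r : ℕ} (hs : 0 < s) (h2 : 1 ≤ p ^ s)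
    {b : Fin r → ZMod (p ^ s - 1)} {i j : ℕ} (hij : i ≤ j)
    (h : p ^ i • b = p ^ j • b) : p ^ (j - i) • b = b := by
  have key := congrArg (fun x => p ^ (i * (s - 1)) • x) h
  simp only [← mul_smul, ← pow_add] at key
  have e1 : i * (s - 1) + i = s * i := by
    obtain ⟨s', rfl⟩ : ∃ s', s = s' + 1 := ⟨s - 1, by omega⟩
    simp only [Nat.add_sub_cancel]
    ring
  have e2 : i * (s - 1) + j = s * i + (j - i) := by
    obtain ⟨s', rfl⟩ : ∃ s', s = s' + 1 := ⟨s - 1, by omega⟩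
    simp only [Nat.add_sub_cancel]
    have : i * s' + j = (s' + 1) * i + (j - i) := by
      have := Nat.sub_add_cancel hij
      nlinarith [Nat.sub_add_cancel hij]
    linarith [this]
  rw [e1, e2, pow_add, mul_smul, smul_ps_mul h2, smul_ps_mul h2] at key
  exact key.symm

variable {p s r : ℕ}

theorem smul_nb_mul {b : Fin r → ZMod (p ^ s - 1)} {nb : ℕ}
    (hb : p ^ nb • b = b) (k : ℕ) : p ^ (nb * k) • b = b := by
  induction k with
  | zero => simp
  | succ k ih =>
    have : nb * (k + 1) = nb * k + nb := by ring
    rw [this, pow_add, mul_smul, hb, ih]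

/-- minimality gives divisibility -/
theorem nb_dvd {b : Fin r → ZMod (p ^ s - 1)} {nb : ℕ} (hpos : 0 < nb)
    (hb : p ^ nb • b = b) (hmin : ∀ m : ℕ, 0 < m → p ^ m • b = b → nb ≤ m)
    {d : ℕ} (hd : p ^ d • b = b) : nb ∣ d := by
  rcases Nat.eq_zero_or_pos d with rfl | hdpos
  · exact dvd_zero _
  have hr : p ^ (d % nb) • b = b := by
    conv_lhs => rw [show d % nb = d % nb from rfl]
    have : p ^ d • b = p ^ (d % nb) • b := by
      conv_lhs => rw [← Nat.mod_add_div d nb]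
      rw [pow_add, mul_smul, smul_nb_mul hb]
    rw [← this, hd]
  rcases Nat.eq_zero_or_pos (d % nb) with h0 | hrpos
  · exact Nat.dvd_of_mod_eq_zero h0
  · exact absurd (hmin _ hrpos hr) (by have := Nat.mod_lt d hpos; omega)

/-- well-definedness of `a ^ (p ^ i)` along the orbit -/
theorem pow_well_defined (hs : 0 < s) (h2 : 1 ≤ p ^ s)
    {b : Fin r → ZMod (p ^ s - 1)} {nb : ℕ} (hpos : 0 < nb)
    (hb : p ^ nb • b = b) (hmin : ∀ m : ℕ, 0 < m → p ^ m • b = b → nb ≤ m)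
    {F : Type} [CommRing F] {a : F} (ha : a ^ p ^ nb = a)
    {i j : ℕ} (h : p ^ i • b = p ^ j • b) : a ^ p ^ i = a ^ p ^ j := by
  have key : ∀ i j : ℕ, i ≤ j → p ^ i • b = p ^ j • b → a ^ p ^ i = a ^ p ^ j := by
    intro i j hij h
    obtain ⟨t, ht⟩ := nb_dvd hpos hb hmin (smul_cancel hs h2 hij h)
    have hj : j = nb * t + i := (Nat.sub_eq_iff_eq_add hij).mp ht
    subst hj
    have hfix : ∀ t : ℕ, a ^ p ^ (nb * t) = a := by
      intro t
      induction t with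
      | zero => simp
      | succ t ih =>
        have : nb * (t + 1) = nb * t + nb := by ring
        rw [this, pow_add, pow_mul, ih, ha]
    rw [pow_add, pow_mul, hfix]
  rcases le_total i j with hij | hij
  · exact key _ _ hij h
  · exact (key _ _ hij h.symm).symm




/-- the monomial evaluation as a monoid hom on the torus -/
noncomputable def chi (F : Type) [Field F] {r m : ℕ} (u : Fin r → ZMod m) :
    (Fin r → Fˣ) →* F where
  toFun := monomEval F u
  map_one' := by simp [monomEval]
  map_mul' t t' := by
    simp only [monomEval, Pi.mul_apply, Units.val_mul, mul_pow]
    rw [Finset.prod_mul_distrib]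

theorem chi_injective {F : Type} [Field F] [Fintype F] {r : ℕ} {p s : ℕ}
    (hF : Fintype.card F = p ^ s) (h2 : 2 ≤ p ^ s) :
    Function.Injective (chi F (r := r) (m := p ^ s - 1)) := by
  haveI : NeZero (p ^ s - 1) := ⟨by omega⟩
  obtain ⟨g, hg⟩ := IsCyclic.exists_generator (α := Fˣ)
  have hord : orderOf g = p ^ s - 1 := by
    rw [orderOf_eq_card_of_forall_mem_zpowers hg, Nat.card_eq_fintype_card, Fintype.card_units, hF]
  intro u u' h
  funext j
  have hev := congrFun (congrArg (fun f => f.toFun) h) (Function.update (1 : Fin r → Fˣ) j g)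
  simp only [chi, monomEval] at hev
  have heval : ∀ (w : Fin r → ZMod (p ^ s - 1)),
      (∏ k, (((Function.update (1 : Fin r → Fˣ) j g) k : F) ^ (w k).val))
        = ((g : F) ^ (w j).val) := by
    intro w
    rw [Finset.prod_eq_single j]
    · simp
    · intro k _ hk
      simp [Function.update_of_ne hk]
    · simp
  rw [heval, heval] at hev
  have hev' : g ^ (u j).val = g ^ (u' j).val := by
    apply Units.ext
    push_cast
    exact hev
  have := pow_injOn_Iio_orderOf (x := g)
    (by rw [hord]; exact Set.mem_Iio.mpr (ZMod.val_lt _))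
    (by rw [hord]; exact Set.mem_Iio.mpr (ZMod.val_lt _)) hev'
  exact ZMod.val_injective _ this

theorem chi_linearIndependent {F : Type} [Field F] [Fintype F] {r : ℕ} {p s : ℕ}
    (hF : Fintype.card F = p ^ s) (h2 : 2 ≤ p ^ s) :
    LinearIndependent F (fun u : Fin r → ZMod (p ^ s - 1) => monomEval F u) := by
  have := (linearIndependent_monoidHom (Fin r → Fˣ) F).comp _ (chi_injective hF h2)
  exact this




theorem charP_of_card {F : Type} [Field F] [Fintype F] {p s : ℕ} (hp : p.Prime) (hs : 0 < s)
    (hF : Fintype.card F = p ^ s) : CharP F p := by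
  obtain ⟨c, hc⟩ := CharP.exists F
  haveI := hc
  obtain ⟨n, hcp, hcard⟩ := FiniteField.card F c
  have : c = p := by
    have h1 : c ∣ p ^ s := by
      rw [← hF, hcard]
      exact dvd_pow_self c (by positivity)
    have := (Nat.Prime.dvd_of_dvd_pow hcp h1)
    exact (Nat.prime_dvd_prime_iff_eq hcp hp).mp this
  rwa [this] at hc


/-- Frobenius on evaluations: `(χ_u t)^p = χ_{p•u} t`. -/
theorem monomEval_pow_p {F : Type} [Field F] [Fintype F] {r p s : ℕ}
    (hF : Fintype.card F = p ^ s) (h2 : 2 ≤ p ^ s)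
    (u : Fin r → ZMod (p ^ s - 1)) (t : Fin r → Fˣ) :
    (monomEval F u t) ^ p = monomEval F (p • u) t := by
  haveI : NeZero (p ^ s - 1) := ⟨by omega⟩
  simp only [monomEval]
  rw [← Finset.prod_pow]
  apply Finset.prod_congr rfl
  intro j _
  rw [← pow_mul]
  -- reduce to units
  have key : (t j) ^ ((u j).val * p) = (t j) ^ ((p • u) j).val := by
    rw [pow_eq_pow_iff_modEq]
    have hdvd : orderOf (t j) ∣ p ^ s - 1 := by
      have := orderOf_dvd_card (x := t j)
      rwa [Fintype.card_units, hF] at this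
    apply Nat.ModEq.of_dvd hdvd
    rw [← ZMod.natCast_eq_natCast_iff]
    push_cast
    rw [ZMod.natCast_val, ZMod.cast_id, ZMod.natCast_val, ZMod.cast_id, smul_cast,
      mul_comm]
  calc ((t j : F)) ^ ((u j).val * p) = (((t j) ^ ((u j).val * p) : Fˣ) : F) := by push_cast; ring
    _ = (((t j) ^ (((p • u) j).val) : Fˣ) : F) := by rw [key]
    _ = ((t j : F)) ^ ((p • u) j).val := by push_cast; ring



theorem mem_bot_subfield {F : Type} [Field F] {x : F} :
    x ∈ (⊥ : Subfield F) ↔ ∀ S : Subfield F, x ∈ S := by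
  rw [← Subfield.closure_empty, Subfield.mem_closure]
  exact ⟨fun h S => h S (Set.empty_subset _), fun h S _ => h S⟩

theorem bot_eq_fieldRange {F : Type} [Field F] {p : ℕ} [Fact p.Prime] [CharP F p] :
    (⊥ : Subfield F) = (ZMod.castHom (dvd_refl p) F).fieldRange := by
  apply le_antisymm bot_le
  rintro x ⟨a, rfl⟩
  obtain ⟨k, rfl⟩ := ZMod.natCast_zmod_surjective a
  rw [map_natCast]
  exact mem_bot_subfield.mpr (fun S => natCast_mem S k)

theorem card_bot {F : Type} [Field F] [Fintype F] {p : ℕ} [Fact p.Prime] [CharP F p] :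
    Nat.card (⊥ : Subfield F) = p := by
  rw [bot_eq_fieldRange (p := p)]
  have hinj : Function.Injective (ZMod.castHom (dvd_refl p) F) :=
    (ZMod.castHom (dvd_refl p) F).injective
  have : Nat.card (ZMod.castHom (dvd_refl p) F).fieldRange = Nat.card (ZMod p) := by
    apply Nat.card_congr
    exact (Equiv.ofInjective _ hinj).symm
  rw [this, Nat.card_eq_fintype_card, ZMod.card]

theorem mem_bot_iff_pow {F : Type} [Field F] [Fintype F] {p : ℕ} [Fact p.Prime] [CharP F p]
    {x : F} : x ∈ (⊥ : Subfield F) ↔ x ^ p = x := by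
  have hp : p.Prime := Fact.out
  constructor
  · rw [bot_eq_fieldRange (p := p)]
    rintro ⟨a, rfl⟩
    rw [← map_pow, ZMod.pow_card]
  · intro hx
    -- counting argument
    classical
    let B : Finset F := Finset.univ.filter (· ∈ (⊥ : Subfield F))
    let R : Finset F := Finset.univ.filter (fun y => y ^ p = y)
    have hBR : B ⊆ R := by
      intro y hy
      simp only [B, R, Finset.mem_filter, Finset.mem_univ, true_and] at hy ⊢
      rw [bot_eq_fieldRange (p := p)] at hy
      obtain ⟨a, rfl⟩ := hy
      rw [← map_pow, ZMod.pow_card]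
    have hcardB : B.card = p := by
      have : B.card = Nat.card (⊥ : Subfield F) := by
        rw [Nat.card_eq_fintype_card, Fintype.card_subtype]
      rw [this, card_bot (F := F) (p := p)]
    have hdeg : (Polynomial.X ^ p - Polynomial.X : Polynomial F).natDegree = p := by
      rw [Polynomial.natDegree_sub_eq_left_of_natDegree_lt, Polynomial.natDegree_X_pow]
      rw [Polynomial.natDegree_X_pow, Polynomial.natDegree_X]
      exact hp.one_lt
    have hne : (Polynomial.X ^ p - Polynomial.X : Polynomial F) ≠ 0 := by
      intro h0
      rw [h0, Polynomial.natDegree_zero] at hdeg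
      exact hp.ne_zero hdeg.symm
    have hcardR : R.card ≤ p := by
      have hsub : R ⊆ (Polynomial.X ^ p - Polynomial.X : Polynomial F).roots.toFinset := by
        intro y hy
        simp only [R, Finset.mem_filter, Finset.mem_univ, true_and] at hy
        rw [Multiset.mem_toFinset, Polynomial.mem_roots hne]
        simp [Polynomial.IsRoot, hy]
      calc R.card ≤ _ := Finset.card_le_card hsub
        _ ≤ (Polynomial.X ^ p - Polynomial.X : Polynomial F).roots.card :=
            Multiset.toFinset_card_le _
        _ ≤ (Polynomial.X ^ p - Polynomial.X : Polynomial F).natDegree :=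
            Polynomial.card_roots' _
        _ ≤ p := le_of_eq hdeg
    have hBReq : B = R := Finset.eq_of_subset_of_card_le hBR (by omega)
    have : x ∈ R := by simp [R, hx]
    rw [← hBReq] at this
    simpa [B] using this



theorem card_fixed_pow {F : Type} [Field F] [Fintype F] {p s : ℕ} (hp : p.Prime)
    (hs : 0 < s) (hF : Fintype.card F = p ^ s) {nb : ℕ} (hpos : 0 < nb) (hdvd : nb ∣ s) :
    Nat.card {a : F // a ^ p ^ nb = a} = p ^ nb := by
  have h2 : 2 ≤ p ^ nb := by
    have := one_lt_pow' (M := ℕ) hp.one_lt (show nb ≠ 0 by omega)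
    omega
  have h2s : 2 ≤ p ^ s := by
    have := one_lt_pow' (M := ℕ) hp.one_lt (show s ≠ 0 by omega)
    omega
  set d : ℕ := p ^ nb - 1 with hd
  have hdd : d ∣ p ^ s - 1 := by
    obtain ⟨k, rfl⟩ := hdvd
    have := Nat.sub_dvd_pow_sub_pow (p ^ nb) 1 k
    simpa [← pow_mul] using this
  -- a primitive (p^s - 1)-th root of unity
  obtain ⟨g, hg⟩ := IsCyclic.exists_generator (α := Fˣ)
  have hord : orderOf g = p ^ s - 1 := by
    rw [orderOf_eq_card_of_forall_mem_zpowers hg, Nat.card_eq_fintype_card,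
      Fintype.card_units, hF]
  have hprim : IsPrimitiveRoot ((g : F)) (p ^ s - 1) := by
    rw [IsPrimitiveRoot.coe_units_iff]
    exact hord ▸ IsPrimitiveRoot.orderOf g
  obtain ⟨e, he⟩ := hdd
  have hprimd : IsPrimitiveRoot ((g : F) ^ e) d :=
    hprim.pow (by omega) (by rw [he, mul_comm])
  have hcard : (Polynomial.nthRootsFinset d (1 : F)).card = d := hprimd.card_nthRootsFinset
  -- the fixed set is {0} ∪ d-th roots of unity
  have hset : {a : F | a ^ p ^ nb = a} =
      ↑(insert (0 : F) (Polynomial.nthRootsFinset d (1 : F))) := by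
    ext a
    simp only [Set.mem_setOf_eq, Finset.coe_insert, Set.mem_insert_iff,
      Finset.mem_coe, Polynomial.mem_nthRootsFinset (show 0 < d by omega) (1 : F)]
    constructor
    · intro h
      rcases eq_or_ne a 0 with rfl | ha
      · exact Or.inl rfl
      · right
        have : a ^ (d + 1) = a := by
          rw [hd]
          have : p ^ nb - 1 + 1 = p ^ nb := by omega
          rw [this, h]
        rw [pow_succ] at this
        exact mul_left_cancel₀ ha (by rw [mul_comm a, this, mul_one])
    · rintro (rfl | h)
      · exact zero_pow (by positivity)
      · have : a ^ (d + 1) = a := by rw [pow_succ, h, one_mul]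
        have he' : p ^ nb = d + 1 := by omega
        rw [he']
        exact this
  have : Nat.card {a : F // a ^ p ^ nb = a}
      = (insert (0 : F) (Polynomial.nthRootsFinset d (1 : F))).card := by
    have e1 : Nat.card {a : F // a ^ p ^ nb = a} = Nat.card {a : F | a ^ p ^ nb = a} := rfl
    rw [e1, Nat.card_coe_set_eq, hset, Set.ncard_coe_finset]
  rw [this, Finset.card_insert_of_notMem, hcard]
  · omega
  · intro h0
    have := (Polynomial.mem_nthRootsFinset (show 0 < d by omega) (1 : F)).mp h0
    simp [zero_pow (show d ≠ 0 by omega)] at this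

theorem tau_sigma {p s r : ℕ} (h2 : 1 ≤ p ^ s) (hs : 0 < s) (w : Fin r → ZMod (p ^ s - 1)) :
    p • (p ^ (s - 1) • w) = w := by
  rw [← mul_smul]
  have e : p * p ^ (s - 1) = p ^ s := by
    rw [← pow_succ']
    congr 1
    omega
  rw [e, smul_ps h2]

theorem sigma_tau {p s r : ℕ} (h2 : 1 ≤ p ^ s) (hs : 0 < s) (w : Fin r → ZMod (p ^ s - 1)) :
    p ^ (s - 1) • (p • w) = w := by
  rw [← mul_smul]
  have e : p ^ (s - 1) * p = p ^ s := by
    rw [← pow_succ]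
    congr 1
    omega
  rw [e, smul_ps h2]

theorem comb_injective {F : Type} [Field F] [Fintype F] {r p s : ℕ} [NeZero (p ^ s - 1)]
    (hF : Fintype.card F = p ^ s) (h2 : 2 ≤ p ^ s) :
    Function.Injective
      (fun c : (Fin r → ZMod (p ^ s - 1)) → F => ∑ w, c w • monomEval F w) := by
  intro c c' h
  have h' : (∑ w, c w • monomEval F w) = ∑ w, c' w • monomEval F w := h
  have li := chi_linearIndependent (r := r) hF h2
  rw [Fintype.linearIndependent_iff] at li
  have hz : ∑ w, (c w - c' w) • monomEval F w = 0 := by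
    simp only [sub_smul, Finset.sum_sub_distrib]
    rw [h', sub_self]
  funext w
  exact sub_eq_zero.mp (li _ hz w)

/-- the Frobenius of a combination is the combination of twisted coefficients -/
theorem comb_pow {F : Type} [Field F] [Fintype F] {r p s : ℕ} [NeZero (p ^ s - 1)]
    (hp : p.Prime) (hs : 0 < s)
    (hF : Fintype.card F = p ^ s) (h2 : 2 ≤ p ^ s)
    (c : (Fin r → ZMod (p ^ s - 1)) → F) (t : Fin r → Fˣ) :
    ((∑ w, c w • monomEval F w) t) ^ p
      = (∑ w, (c (p ^ (s - 1) • w)) ^ p • monomEval F w) t := by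
  haveI : CharP F p := charP_of_card hp hs hF
  haveI : Fact p.Prime := ⟨hp⟩
  have hτ : Function.Bijective (fun w : Fin r → ZMod (p ^ s - 1) => p ^ (s - 1) • w) :=
    Function.bijective_iff_has_inverse.mpr
      ⟨fun w => p • w, fun w => tau_sigma (by omega) hs w, fun w => sigma_tau (by omega) hs w⟩
  have hσ : Function.Bijective (fun w : Fin r → ZMod (p ^ s - 1) => p • w) :=
    Function.bijective_iff_has_inverse.mpr
      ⟨fun w => p ^ (s - 1) • w, fun w => sigma_tau (by omega) hs w,
        fun w => tau_sigma (by omega) hs w⟩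
  simp only [Finset.sum_apply, Pi.smul_apply, smul_eq_mul]
  rw [sum_pow_char]
  calc ∑ i : Fin r → ZMod (p ^ s - 1), (c i * monomEval F i t) ^ p
      = ∑ i : Fin r → ZMod (p ^ s - 1),
          (c (p ^ (s - 1) • (p • i))) ^ p * monomEval F (p • i) t := by
        apply Finset.sum_congr rfl
        intro i _
        rw [mul_pow, monomEval_pow_p hF h2, sigma_tau (by omega) hs]
    _ = ∑ w : Fin r → ZMod (p ^ s - 1), (c (p ^ (s - 1) • w)) ^ p * monomEval F w t :=
        Fintype.sum_bijective _ hσ _ _ (fun i => rfl)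

theorem mem_span_iff {F : Type} [Field F] [Fintype F] {r p s : ℕ} [NeZero (p ^ s - 1)]
    (U : Finset (Fin r → ZMod (p ^ s - 1))) (v : (Fin r → Fˣ) → F) :
    v ∈ Submodule.span F (monomEval F '' (U : Set (Fin r → ZMod (p ^ s - 1)))) ↔
      ∃ c : (Fin r → ZMod (p ^ s - 1)) → F,
        (∀ w, w ∉ U → c w = 0) ∧ v = ∑ w, c w • monomEval F w := by
  constructor
  · intro hv
    induction hv using Submodule.span_induction with
    | mem x hx =>
      obtain ⟨u, hu, rfl⟩ := hx
      refine ⟨fun w => if w = u then 1 else 0, ?_, ?_⟩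
      · intro w hw
        show (if w = u then (1:F) else 0) = 0
        rw [if_neg]
        rintro rfl
        exact hw hu
      · simp [ite_smul, Finset.sum_ite_eq']
    | zero => exact ⟨0, fun _ _ => rfl, by simp⟩
    | add x y hx hy ihx ihy =>
      obtain ⟨c1, hc1, rfl⟩ := ihx
      obtain ⟨c2, hc2, rfl⟩ := ihy
      refine ⟨c1 + c2, fun w hw => by simp [hc1 w hw, hc2 w hw], ?_⟩
      rw [← Finset.sum_add_distrib]
      apply Finset.sum_congr rfl
      intro w _
      simp [add_smul]
    | smul a x hx ihx =>
      obtain ⟨c, hc, rfl⟩ := ihx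
      refine ⟨a • c, fun w hw => by simp [hc w hw], ?_⟩
      rw [Finset.smul_sum]
      apply Finset.sum_congr rfl
      intro w _
      simp [smul_smul]
  · rintro ⟨c, hc, rfl⟩
    apply Submodule.sum_mem
    intro w _
    by_cases hw : w ∈ U
    · exact Submodule.smul_mem _ _ (Submodule.subset_span ⟨w, hw, rfl⟩)
    · rw [hc w hw]
      simp

theorem values_in_bot_iff {F : Type} [Field F] [Fintype F] {r p s : ℕ} [NeZero (p ^ s - 1)]
    (hp : p.Prime) (hs : 0 < s) (hF : Fintype.card F = p ^ s) (h2 : 2 ≤ p ^ s)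
    (c : (Fin r → ZMod (p ^ s - 1)) → F) :
    (∀ t, (∑ w, c w • monomEval F w) t ∈ (⊥ : Subfield F)) ↔
      (∀ w, c w = (c (p ^ (s - 1) • w)) ^ p) := by
  haveI : CharP F p := charP_of_card hp hs hF
  haveI : Fact p.Prime := ⟨hp⟩
  constructor
  · intro h
    have heq : (fun w => (c (p ^ (s - 1) • w)) ^ p) = c := by
      apply comb_injective hF h2
      funext t
      show (∑ w, (c (p ^ (s - 1) • w)) ^ p • monomEval F w) t = _
      rw [← comb_pow hp hs hF h2]
      exact (mem_bot_iff_pow (p := p)).mp (h t)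
    intro w
    exact (congrFun heq w).symm
  · intro h t
    rw [mem_bot_iff_pow (p := p)]
    rw [comb_pow hp hs hF h2]
    apply congrFun
    exact Finset.sum_congr rfl fun w _ => by rw [← h w]

theorem card_Tset {F : Type} [Field F] [Fintype F] {r p s : ℕ} [NeZero (p ^ s - 1)]
    (hp : p.Prime) (hs : 0 < s) (hF : Fintype.card F = p ^ s) (h2 : 2 ≤ p ^ s)
    (U : Finset (Fin r → ZMod (p ^ s - 1)))
    (n : (Fin r → ZMod (p ^ s - 1)) → ℕ)
    (hn : ∀ b, 0 < n b ∧ p ^ n b • b = b ∧ ∀ m : ℕ, 0 < m → p ^ m • b = b → n b ≤ m)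
    (J : Finset (Fin r → ZMod (p ^ s - 1)))
    (hJ : ∀ x : Fin r → ZMod (p ^ s - 1), ∃! b, b ∈ J ∧ ∃ i : ℕ, x = p ^ i • b) :
    Nat.card {c : (Fin r → ZMod (p ^ s - 1)) → F //
        (∀ w, w ∉ U → c w = 0) ∧ ∀ w, c w = (c (p ^ (s - 1) • w)) ^ p}
      = ∏ b ∈ J.filter (fun b => ∀ i : ℕ, p ^ i • b ∈ U), p ^ (n b) := by
  classical
  set P : (Fin r → ZMod (p ^ s - 1)) → Prop := fun b => ∀ i : ℕ, p ^ i • b ∈ U with hP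
  set J' : Finset (Fin r → ZMod (p ^ s - 1)) := J.filter P with hJ'
  -- representatives
  have hrep0 : ∀ x : (Fin r → ZMod (p ^ s - 1)), (hJ x).choose ∈ J ∧ ∃ i : ℕ, x = p ^ i • (hJ x).choose :=
    fun x => (hJ x).choose_spec.1
  set rep : (Fin r → ZMod (p ^ s - 1)) → (Fin r → ZMod (p ^ s - 1)) := fun x => (hJ x).choose with hrepdef
  have hrepJ : ∀ x, rep x ∈ J := fun x => (hrep0 x).1
  have hrepu : ∀ (x b : (Fin r → ZMod (p ^ s - 1))), b ∈ J → (∃ i : ℕ, x = p ^ i • b) → b = rep x :=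
    fun x b hb hi => (hJ x).choose_spec.2 b ⟨hb, hi⟩
  set idx : (Fin r → ZMod (p ^ s - 1)) → ℕ := fun x => (hrep0 x).2.choose with hidxdef
  have hidx : ∀ x : (Fin r → ZMod (p ^ s - 1)), x = p ^ (idx x) • rep x := fun x => (hrep0 x).2.choose_spec
  have hrep_smul : ∀ (k : ℕ) (x : (Fin r → ZMod (p ^ s - 1))), rep (p ^ k • x) = rep x := by
    intro k x
    refine (hrepu (p ^ k • x) (rep x) (hrepJ x) ⟨k + idx x, ?_⟩).symm
    rw [pow_add, mul_smul, ← hidx x]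
  have hrep_self : ∀ b : (Fin r → ZMod (p ^ s - 1)), b ∈ J → rep b = b :=
    fun b hb => (hrepu b b hb ⟨0, by simp⟩).symm
  -- τ and its interaction
  have hrepτ : ∀ w : Fin r → ZMod (p ^ s - 1), rep (p ^ (s - 1) • w) = rep w :=
    fun w => hrep_smul (s - 1) w
  have hστ : ∀ w : Fin r → ZMod (p ^ s - 1), p • (p ^ (s - 1) • w) = w :=
    fun w => tau_sigma (by omega) hs w
  have hτσ : ∀ w : Fin r → ZMod (p ^ s - 1), p ^ (s - 1) • (p • w) = w :=
    fun w => sigma_tau (by omega) hs w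
  -- chain rule for elements of Tset
  have hstep : ∀ (c : (Fin r → ZMod (p ^ s - 1)) → F),
      (∀ w, c w = (c (p ^ (s - 1) • w)) ^ p) → ∀ x, c (p • x) = (c x) ^ p := by
    intro c hc x
    have := hc (p • x)
    rwa [hτσ x] at this
  have hchain : ∀ (c : (Fin r → ZMod (p ^ s - 1)) → F),
      (∀ w, c w = (c (p ^ (s - 1) • w)) ^ p) →
      ∀ (i : ℕ) (x : (Fin r → ZMod (p ^ s - 1))), c (p ^ i • x) = (c x) ^ p ^ i := by
    intro c hc i
    induction i with
    | zero => intro x; simp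
    | succ i ih =>
      intro x
      have e1 : p ^ (i + 1) • x = p ^ i • (p • x) := by
        rw [← mul_smul, ← pow_succ]
      rw [e1, ih (p • x), hstep c hc x, ← pow_mul, ← pow_succ']
  -- well-definedness shortcut
  have wd : ∀ (b : (Fin r → ZMod (p ^ s - 1))) (a : F), a ^ p ^ (n b) = a → ∀ i j : ℕ,
      p ^ i • b = p ^ j • b → a ^ p ^ i = a ^ p ^ j := by
    intro b a ha i j hij
    exact pow_well_defined hs (by omega) (hn b).1 (hn b).2.1 (hn b).2.2 ha hij
  -- membership facts
  have hmemJ' : ∀ b : (Fin r → ZMod (p ^ s - 1)), b ∈ J' ↔ b ∈ J ∧ P b := by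
    intro b; rw [hJ', Finset.mem_filter]
  -- the equivalence
  have hbU : ∀ b : {b : (Fin r → ZMod (p ^ s - 1)) // b ∈ J'}, (b : (Fin r → ZMod (p ^ s - 1))) ∈ U := by
    intro b
    have := ((hmemJ' b).mp b.2).2
    have h0 := this 0
    simpa using h0
  refine Eq.trans (Nat.card_congr
    (β := (b : {b : Fin r → ZMod (p ^ s - 1) // b ∈ J'}) →
      {x : F // x ^ p ^ (n (b : Fin r → ZMod (p ^ s - 1))) = x})
    (Equiv.ofBijective (?_) ⟨?_, ?_⟩)) ?_
  · -- the forward map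
    refine fun c => fun b => ⟨c.1 (b : (Fin r → ZMod (p ^ s - 1))), ?_⟩
    have h1 := hchain c.1 c.2.2 (n (b : (Fin r → ZMod (p ^ s - 1)))) (b : (Fin r → ZMod (p ^ s - 1)))
    rw [(hn (b : (Fin r → ZMod (p ^ s - 1)))).2.1] at h1
    exact h1.symm
  · -- injectivity
    intro c c' hcc
    have hval : ∀ b : (Fin r → ZMod (p ^ s - 1)), b ∈ J' → c.1 b = c'.1 b := by
      intro b hb
      have := congrFun hcc ⟨b, hb⟩
      exact Subtype.ext_iff.mp this
    -- c vanishes on orbits not entirely inside U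
    have hzero : ∀ (cc : {c : (Fin r → ZMod (p ^ s - 1)) → F //
        (∀ w, w ∉ U → c w = 0) ∧ ∀ w, c w = (c (p ^ (s - 1) • w)) ^ p}),
        ∀ w : (Fin r → ZMod (p ^ s - 1)), ¬ P (rep w) → cc.1 w = 0 := by
      intro cc w hnP
      have hnP2 : ∃ i : ℕ, p ^ i • rep w ∉ U := by
        by_contra hcon
        push_neg at hcon
        exact hnP hcon
      obtain ⟨i, hi⟩ := hnP2
      have h0 : cc.1 (p ^ i • rep w) = 0 := cc.2.1 _ hi
      rw [hchain cc.1 cc.2.2 i (rep w)] at h0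
      have hb0 : cc.1 (rep w) = 0 := by
        have := pow_eq_zero_iff (n := p ^ i) (pow_ne_zero i hp.ne_zero) |>.mp h0
        exact this
      rw [hidx w, hchain cc.1 cc.2.2 (idx w) (rep w), hb0]
      exact zero_pow (pow_ne_zero _ hp.ne_zero)
    apply Subtype.ext
    funext w
    by_cases hPw : P (rep w)
    · have hb : rep w ∈ J' := (hmemJ' (rep w)).mpr ⟨hrepJ w, hPw⟩
      rw [hidx w, hchain c.1 c.2.2 (idx w) (rep w), hchain c'.1 c'.2.2 (idx w) (rep w),
        hval (rep w) hb]
    · rw [hzero c w hPw, hzero c' w hPw]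
  · -- surjectivity
    intro a
    have hcast : ∀ (i j : {b // b ∈ J'}), i = j → (a i : F) = (a j : F) := by
      rintro i j rfl
      rfl
    set cinv : (Fin r → ZMod (p ^ s - 1)) → F :=
      fun w => if h : rep w ∈ J' then (a ⟨rep w, h⟩ : F) ^ p ^ (idx w) else 0 with hcinv
    refine ⟨⟨cinv, ?_, ?_⟩, ?_⟩
    · -- support condition
      intro w hw
      simp only [hcinv]
      rw [dif_neg]
      intro hmem
      have hPw := ((hmemJ' (rep w)).mp hmem).2
      exact hw (hidx w ▸ hPw (idx w))
    · -- recursion condition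
      intro w
      simp only [hcinv]
      by_cases hm : rep w ∈ J'
      · have hm2 : rep (p ^ (s - 1) • w) ∈ J' := by rw [hrepτ w]; exact hm
        rw [dif_pos hm, dif_pos hm2]
        have hKa : (a ⟨rep w, hm⟩ : F) ^ p ^ (n (rep w)) = (a ⟨rep w, hm⟩ : F) :=
          (a ⟨rep w, hm⟩).2
        rw [hcast ⟨rep (p ^ (s - 1) • w), hm2⟩ ⟨rep w, hm⟩ (Subtype.ext (hrepτ w))]
        rw [← pow_mul, ← pow_succ]
        apply wd (rep w) _ hKa
        rw [← hidx w, pow_succ', mul_smul, ← hrepτ w, ← hidx (p ^ (s - 1) • w), hστ w]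
      · have hm2 : ¬ rep (p ^ (s - 1) • w) ∈ J' := by rw [hrepτ w]; exact hm
        rw [dif_neg hm, dif_neg hm2]
        rw [zero_pow hp.ne_zero]
    · -- right inverse
      funext b
      apply Subtype.ext
      show cinv (b : (Fin r → ZMod (p ^ s - 1))) = (a b : F)
      have hrb : rep (b : (Fin r → ZMod (p ^ s - 1))) = (b : (Fin r → ZMod (p ^ s - 1))) := hrep_self _ (Finset.mem_of_mem_filter _ b.2)
      have hm : rep (b : (Fin r → ZMod (p ^ s - 1))) ∈ J' := by rw [hrb]; exact b.2
      simp only [hcinv]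
      rw [dif_pos hm]
      rw [hcast ⟨rep (b : (Fin r → ZMod (p ^ s - 1))), hm⟩ b (Subtype.ext hrb)]
      have hKa : (a b : F) ^ p ^ (n (b : (Fin r → ZMod (p ^ s - 1)))) = (a b : F) := (a b).2
      have := wd (b : (Fin r → ZMod (p ^ s - 1))) (a b : F) hKa
        (idx (b : (Fin r → ZMod (p ^ s - 1)))) 0
        (by
          have h0 := (hidx (b : (Fin r → ZMod (p ^ s - 1)))).symm
          rw [hrb] at h0
          rw [pow_zero, one_smul]
          exact h0)
      simpa using this
  · -- cardinality of the Pi type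
    rw [Nat.card_pi]
    have hcards : ∀ b : {b : (Fin r → ZMod (p ^ s - 1)) // b ∈ J'},
        Nat.card {x : F // x ^ p ^ (n (b : (Fin r → ZMod (p ^ s - 1)))) = x} = p ^ (n (b : (Fin r → ZMod (p ^ s - 1)))) := by
      intro b
      have hdvd : n (b : (Fin r → ZMod (p ^ s - 1))) ∣ s := by
        apply nb_dvd (hn _).1 (hn _).2.1 (hn _).2.2
        exact smul_ps (by omega) _
      exact card_fixed_pow hp hs hF (hn _).1 hdvd
    calc ∏ b : {b : (Fin r → ZMod (p ^ s - 1)) // b ∈ J'}, Nat.card {x : F // x ^ p ^ (n (b : (Fin r → ZMod (p ^ s - 1)))) = x}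
        = ∏ b : {b : (Fin r → ZMod (p ^ s - 1)) // b ∈ J'}, p ^ (n (b : (Fin r → ZMod (p ^ s - 1)))) := by
          exact Finset.prod_congr rfl (fun b _ => hcards b)
      _ = ∏ b ∈ J', p ^ (n b) := by
          rw [← Finset.prod_coe_sort J' (fun b => p ^ (n b))]

end Stmt16

/-- Let `U ⊆ {0,…,p^s-2}^r` and `D_U = C_U ∩ F_p^n` be the
subfield-subcode of the generalized toric code `C_U` over `F_{p^s}`.  Then the
`F_p`-dimension of `D_U` equals the sum of the sizes `n b` of all cyclotomic
cosets `I_b` entirely contained in `U` (summed over a set `J` of coset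
representatives).  `F_p` is the prime subfield `⊥ : Subfield F`. -/
theorem subfield_subcodes_stmt16
    (p s r : ℕ) [Fact p.Prime] (hs : 0 < s)
    (F : Type) [Field F] [Fintype F] (hF : Fintype.card F = p ^ s)
    (U : Finset (Fin r → ZMod (p ^ s - 1)))
    (n : (Fin r → ZMod (p ^ s - 1)) → ℕ)
    (hn : ∀ b, 0 < n b ∧ p ^ n b • b = b ∧ ∀ m : ℕ, 0 < m → p ^ m • b = b → n b ≤ m)
    (J : Finset (Fin r → ZMod (p ^ s - 1)))
    (hJ : ∀ x : Fin r → ZMod (p ^ s - 1), ∃! b, b ∈ J ∧ ∃ i : ℕ, x = p ^ i • b) :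
    Module.finrank (⊥ : Subfield F)
      (Submodule.span (⊥ : Subfield F)
        {v : (Fin r → Fˣ) → F |
          v ∈ Submodule.span F (monomEval F '' (U : Set (Fin r → ZMod (p ^ s - 1)))) ∧
          ∀ t, v t ∈ (⊥ : Subfield F)})
    = ∑ b ∈ J,
        if {x : Fin r → ZMod (p ^ s - 1) | ∃ i : ℕ, x = p ^ i • b}
            ⊆ (U : Set (Fin r → ZMod (p ^ s - 1))) then n b else 0 := by
  classical
  have hp : p.Prime := Fact.out
  have h2 : 2 ≤ p ^ s := by
    have := one_lt_pow' (M := ℕ) hp.one_lt (show s ≠ 0 by omega)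
    omega
  haveI : NeZero (p ^ s - 1) := ⟨by omega⟩
  haveI : CharP F p := Stmt16.charP_of_card hp hs hF
  -- the subfield-subcode as a ⊥-submodule
  set S : Set ((Fin r → Fˣ) → F) :=
    {v : (Fin r → Fˣ) → F |
      v ∈ Submodule.span F (monomEval F '' (U : Set (Fin r → ZMod (p ^ s - 1)))) ∧
      ∀ t, v t ∈ (⊥ : Subfield F)} with hSdef
  let S' : Submodule (⊥ : Subfield F) ((Fin r → Fˣ) → F) :=
    { carrier := S
      add_mem' := fun hv hw =>
        ⟨Submodule.add_mem _ hv.1 hw.1, fun t => by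
          rw [Pi.add_apply]; exact add_mem (hv.2 t) (hw.2 t)⟩
      zero_mem' := ⟨Submodule.zero_mem _, fun t => by
        rw [Pi.zero_apply]; exact zero_mem _⟩
      smul_mem' := fun a v hv =>
        ⟨by
          have : a • v = (a : F) • v := by
            funext t
            simp [Subfield.smul_def]
          rw [this]
          exact Submodule.smul_mem _ _ hv.1,
        fun t => by
          have : (a • v) t = (a : F) * v t := by simp [Subfield.smul_def]
          rw [this]
          exact mul_mem a.2 (hv.2 t)⟩ }
  have hspan : Submodule.span (⊥ : Subfield F) S = S' := by
    exact Submodule.span_eq S'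
  rw [show Submodule.span (⊥ : Subfield F)
      {v : (Fin r → Fˣ) → F |
        v ∈ Submodule.span F (monomEval F '' (U : Set (Fin r → ZMod (p ^ s - 1)))) ∧
        ∀ t, v t ∈ (⊥ : Subfield F)} = S' from hspan]
  -- identify the set S with the image of the coefficient space
  set Tset : Set ((Fin r → ZMod (p ^ s - 1)) → F) :=
    {c | (∀ w, w ∉ U → c w = 0) ∧ ∀ w, c w = (c (p ^ (s - 1) • w)) ^ p} with hTdef
  have hST : S = (fun c : (Fin r → ZMod (p ^ s - 1)) → F =>
      ∑ w, c w • monomEval F w) '' Tset := by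
    ext v
    constructor
    · rintro ⟨hv1, hv2⟩
      obtain ⟨c, hc1, rfl⟩ := (Stmt16.mem_span_iff U v).mp hv1
      refine ⟨c, ⟨hc1, ?_⟩, rfl⟩
      exact (Stmt16.values_in_bot_iff hp hs hF h2 c).mp hv2
    · rintro ⟨c, ⟨hc1, hc2⟩, rfl⟩
      exact ⟨(Stmt16.mem_span_iff U _).mpr ⟨c, hc1, rfl⟩,
        (Stmt16.values_in_bot_iff hp hs hF h2 c).mpr hc2⟩
  -- cardinalities
  haveI : Fintype ((Fin r → Fˣ) → F) := inferInstance
  haveI : Fintype S' := Fintype.ofFinite _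
  haveI : Fintype (⊥ : Subfield F) := Fintype.ofFinite _
  have hcard1 : Fintype.card S' = Fintype.card (⊥ : Subfield F) ^
      Module.finrank (⊥ : Subfield F) S' := Module.card_eq_pow_finrank
  have hcardbot : Fintype.card (⊥ : Subfield F) = p := by
    rw [← Nat.card_eq_fintype_card]
    exact Stmt16.card_bot (p := p)
  have hcardS : Nat.card S' = ∏ b ∈ J.filter (fun b => ∀ i : ℕ, p ^ i • b ∈ U), p ^ (n b) := by
    have e0 : Nat.card S' = Nat.card S := rfl
    rw [e0, hST, Nat.card_image_of_injective (Stmt16.comb_injective hF h2)]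
    exact Stmt16.card_Tset hp hs hF h2 U n hn J hJ
  -- conclude the dimension formula
  have hsum : ∏ b ∈ J.filter (fun b => ∀ i : ℕ, p ^ i • b ∈ U), p ^ (n b)
      = p ^ (∑ b ∈ J.filter (fun b => ∀ i : ℕ, p ^ i • b ∈ U), n b) := by
    rw [Finset.prod_pow_eq_pow_sum]
  have hfin : p ^ Module.finrank (⊥ : Subfield F) S'
      = p ^ (∑ b ∈ J.filter (fun b => ∀ i : ℕ, p ^ i • b ∈ U), n b) := by
    rw [← hsum, ← hcardS, Nat.card_eq_fintype_card, hcard1, hcardbot]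
  have hrank := Nat.pow_right_injective hp.two_le hfin
  rw [hrank]
  -- rewrite the right-hand side
  have hcong : ∀ b ∈ J,
      (if {x : Fin r → ZMod (p ^ s - 1) | ∃ i : ℕ, x = p ^ i • b}
          ⊆ (U : Set (Fin r → ZMod (p ^ s - 1))) then n b else 0)
        = (if (∀ i : ℕ, p ^ i • b ∈ U) then n b else 0) := by
    intro b _
    by_cases h : ∀ i : ℕ, p ^ i • b ∈ U
    · rw [if_pos h, if_pos]
      rintro x ⟨i, rfl⟩
      exact h i
    · rw [if_neg h, if_neg]
      intro hsub
      exact h (fun i => hsub ⟨i, rfl⟩)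
  rw [Finset.sum_congr rfl hcong, ← Finset.sum_filter]
end
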